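/- arXiv:1201.0118 — 6 statements merged into one kernel-verified Lean document; each statement's English description precedes it below -/
import Mathlib

section
/- A rooted graph G is path commuting if and only if for every n, the matrices V_n, Λ_{n,+j}, and Λ_{n,-j} (j = 0, 1, 2, …) all pairwise commute, where V_n is the adjacency matrix of the subgraph induced on S_n, Λ_{n,+j} = E_n^T … E_{n+j}^T E_{n+j} … E_n, and Λ_{n,-j} = E_{n-1} … E_{n-j} E_{n-j}^T … E_{n-1}^T (with Λ_{n,-j} = Id for j > n). -/
open SimpleGraph Matrix

attribute [local instance] Classical.propDecidable

/-- A rooted graph: connected, locally finite simple graph with a distinguished root.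
The finiteness of spheres is a consequence of connectedness and local finiteness,
recorded here as a field for convenience. -/
structure RootedGraph (V : Type*) where
  G : SimpleGraph V
  o : V
  connected : G.Connected
  locFin : ∀ v : V, (G.neighborSet v).Finite
  sphereFin : ∀ n : ℕ, {v : V | G.dist o v = n}.Finite

namespace RootedGraph

variable {V : Type*} (R : RootedGraph V)

/-- The sphere of radius `n` around the root. -/
def sphere (n : ℕ) : Set V := {v : V | R.G.dist R.o v = n}

noncomputable instance (n : ℕ) : Fintype ↥(R.sphere n) := (R.sphereFin n).fintype

/-- A k-forward path from `x` to `y` (both in sphere `n`): a path of length `2k`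
going up `k` spheres and then back down, encoded as a function `ℕ → V`
that is constantly `y` from index `2k` on. -/
def IsForwardPath (n k : ℕ) (x y : V) (p : ℕ → V) : Prop :=
  p 0 = x ∧ (∀ j, 2*k ≤ j → p j = y) ∧
  (∀ j, j < 2*k → R.G.Adj (p j) (p (j+1))) ∧
  (∀ j, j ≤ k → p j ∈ R.sphere (n + j)) ∧
  (∀ j, k ≤ j → j ≤ 2*k → p j ∈ R.sphere (n + (2*k - j)))

/-- A k-backward path from `x` to `y` (both in sphere `n`): a path of length `2k`
going down `k` spheres (so `k ≤ n`) and then back up. -/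
def IsBackwardPath (n k : ℕ) (x y : V) (p : ℕ → V) : Prop :=
  k ≤ n ∧ p 0 = x ∧ (∀ j, 2*k ≤ j → p j = y) ∧
  (∀ j, j < 2*k → R.G.Adj (p j) (p (j+1))) ∧
  (∀ j, j ≤ k → p j ∈ R.sphere (n - j)) ∧
  (∀ j, k ≤ j → j ≤ 2*k → p j ∈ R.sphere (n - (2*k - j)))

/-- Number of (k,ℓ)-forward-backward paths from `x` to `y`. -/
noncomputable def fbCount (n k l : ℕ) (x y : V) : ℕ :=
  Nat.card {pq : (ℕ → V) × (ℕ → V) //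
    R.IsForwardPath n k x (pq.1 (2*k)) pq.1 ∧
    R.IsBackwardPath n l (pq.1 (2*k)) y pq.2}

/-- Number of (ℓ,k)-backward-forward paths from `x` to `y`. -/
noncomputable def bfCount (n l k : ℕ) (x y : V) : ℕ :=
  Nat.card {pq : (ℕ → V) × (ℕ → V) //
    R.IsBackwardPath n l x (pq.1 (2*l)) pq.1 ∧
    R.IsForwardPath n k (pq.1 (2*l)) y pq.2}

/-- Number of tailed-k-forward paths from `x` to `y`. -/
noncomputable def tailedFCount (n k : ℕ) (x y : V) : ℕ :=
  Nat.card {p : ℕ → V // R.IsForwardPath n k x (p (2*k)) p ∧ R.G.Adj (p (2*k)) y}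

/-- Number of headed-k-forward paths from `x` to `y`. -/
noncomputable def headedFCount (n k : ℕ) (x y : V) : ℕ :=
  Nat.card {p : ℕ → V // R.G.Adj x (p 0) ∧ R.IsForwardPath n k (p 0) y p}

/-- Number of tailed-k-backward paths from `x` to `y`. -/
noncomputable def tailedBCount (n k : ℕ) (x y : V) : ℕ :=
  Nat.card {p : ℕ → V // R.IsBackwardPath n k x (p (2*k)) p ∧ R.G.Adj (p (2*k)) y}

/-- Number of headed-k-backward paths from `x` to `y`. -/
noncomputable def headedBCount (n k : ℕ) (x y : V) : ℕ :=
  Nat.card {p : ℕ → V // R.G.Adj x (p 0) ∧ R.IsBackwardPath n k (p 0) y p}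

/-- Path commuting rooted graph. -/
def PathCommuting : Prop :=
  ∀ n : ℕ, ∀ x ∈ R.sphere n, ∀ y ∈ R.sphere n, ∀ k l : ℕ,
    R.fbCount n k l x y = R.bfCount n l k x y ∧
    R.tailedFCount n k x y = R.headedFCount n k x y ∧
    R.tailedBCount n k x y = R.headedBCount n k x y

/-- Family preserving rooted graph. -/
def FamilyPreserving : Prop :=
  (∀ n : ℕ, ∀ x ∈ R.sphere n, ∀ y ∈ R.sphere n, ∀ z ∈ R.sphere (n+1),
    R.G.Adj x z → R.G.Adj y z →
    ∃ τ : R.G ≃g R.G, τ R.o = R.o ∧ τ x = y ∧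
      ∀ j : ℕ, 1 ≤ j → ∀ v ∈ R.sphere (n+j), τ v = v) ∧
  (∀ n : ℕ, 1 ≤ n → ∀ x ∈ R.sphere n, ∀ y ∈ R.sphere n, ∀ z ∈ R.sphere (n-1),
    R.G.Adj x z → R.G.Adj y z →
    ∃ τ : R.G ≃g R.G, τ R.o = R.o ∧ τ x = y ∧
      ∀ j : ℕ, 1 ≤ j → j ≤ n → ∀ v ∈ R.sphere (n-j), τ v = v) ∧
  (∀ n : ℕ, ∀ x ∈ R.sphere n, ∀ y ∈ R.sphere n, R.G.Adj x y →
    ∃ γ : R.G ≃g R.G, γ R.o = R.o ∧ γ x = y ∧ γ y = x)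

/-- The 0-1 edge matrix between spheres `j` and `j+1`. -/
noncomputable def Esub (j : ℕ) : Matrix ↥(R.sphere (j+1)) ↥(R.sphere j) ℕ :=
  fun u v => if R.G.Adj u.1 v.1 then 1 else 0

/-- The adjacency matrix of the subgraph induced on sphere `n`. -/
noncomputable def Vsub (n : ℕ) : Matrix ↥(R.sphere n) ↥(R.sphere n) ℕ :=
  fun u v => if R.G.Adj u.1 v.1 then 1 else 0

/-- The product `E_{m+l-1} ⋯ E_{m+1} E_m` of edge matrices (identity for `l = 0`). -/
noncomputable def chainProd (m : ℕ) : (l : ℕ) → Matrix ↥(R.sphere (m + l)) ↥(R.sphere m) ℕ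
  | 0 => (1 : Matrix ↥(R.sphere m) ↥(R.sphere m) ℕ)
  | l+1 => R.Esub (m+l) * chainProd m l

/-- `Λ_{n,+k} = E_n^T ⋯ E_{n+k-1}^T E_{n+k-1} ⋯ E_n`, which counts `k`-forward paths. -/
noncomputable def lamPlus (n k : ℕ) : Matrix ↥(R.sphere n) ↥(R.sphere n) ℕ :=
  (R.chainProd n k)ᵀ * R.chainProd n k

/-- `Λ_{m+l,-l} = E_{m+l-1} ⋯ E_m E_m^T ⋯ E_{m+l-1}^T`, which counts `l`-backward paths. -/
noncomputable def lamMinus (m l : ℕ) : Matrix ↥(R.sphere (m + l)) ↥(R.sphere (m + l)) ℕ :=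
  R.chainProd m l * (R.chainProd m l)ᵀ

/-- `Λ_{n,-j}`, defined as the identity when `j > n`. -/
noncomputable def lamMinusAll : (n j : ℕ) → Matrix ↥(R.sphere n) ↥(R.sphere n) ℕ
  | _, 0 => 1
  | 0, _+1 => 1
  | n+1, j+1 => if j + 1 ≤ n + 1 then R.Esub n * lamMinusAll n j * (R.Esub n)ᵀ else 1

/-- The graph Laplacian acting on real-valued functions. -/
noncomputable def lap (φ : V → ℝ) (x : V) : ℝ :=
  ∑ᶠ y ∈ R.G.neighborSet x, (φ x - φ y)

/-- An antitree: two vertices are adjacent iff their distances to the root differ by one. -/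
def IsAntitree : Prop :=
  ∀ x y : V, R.G.Adj x y ↔
    (R.G.dist R.o x + 1 = R.G.dist R.o y ∨ R.G.dist R.o y + 1 = R.G.dist R.o x)

/-- The set `Z^{k,ℓ}_{x,y}` of vertices in sphere `n` reachable from `x` by a `k`-forward
path and from `y` by an `ℓ`-backward path. -/
def Zset (n k l : ℕ) (x y : V) : Set V :=
  {z | z ∈ R.sphere n ∧ (∃ p, R.IsForwardPath n k x z p) ∧ (∃ q, R.IsBackwardPath n l y z q)}

end RootedGraph

/-!
Entries of `Λ_{n,+k}` and `Λ_{n,-l}` count `k`-forward and `l`-backward paths, so the entries of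
their products with each other and with `V_n` count forward-backward, backward-forward, tailed and
headed paths; hence path commuting says exactly that `V_n` commutes with every `Λ_{n,±k}` and that
`Λ_{n,+k}` commutes with `Λ_{n,-l}`. All these counts come from counting walks that visit a
prescribed sphere at each step, and such counts split as matrix products at any intermediate step.
The remaining commutations follow by induction from `Λ_{n,+(k+1)} = E_nᵀ Λ_{n+1,+k} E_n`,
`Λ_{n+1,-1} = E_n E_nᵀ` and the dual identities for `Λ_{n,-j}`: if `A` and `B` commute with each
other and with `X Y`, then `Y A X` and `Y B X` commute.
-/

section Counting

variable {α β ι : Type*} {s : Set ι} [Fintype s]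

theorem natCard_eq_sum_natCard_fiber (P : α → Prop) (f : α → ι) (hf : ∀ a, P a → f a ∈ s)
    (hfin : ∀ z : s, Finite {a // P a ∧ f a = z}) :
    Nat.card {a // P a} = ∑ z : s, Nat.card {a // P a ∧ f a = z} := by
  let g : {a // P a} → s := fun a => ⟨f a, hf a a.2⟩
  have hfiber (z : s) : {a : {a // P a} // g a = z} ≃ {a // P a ∧ f a = z} :=
    { toFun := fun a => ⟨a.1.1, a.1.2, congrArg Subtype.val a.2⟩
      invFun := fun a => ⟨⟨a.1, a.2.1⟩, Subtype.ext a.2.2⟩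
      left_inv := fun _ => rfl
      right_inv := fun _ => rfl }
  have : ∀ z : s, Finite {a : {a // P a} // g a = z} := fun z => .of_equiv _ (hfiber z).symm
  rw [← Nat.card_congr (Equiv.sigmaFiberEquiv g), Nat.card_sigma]
  exact Finset.sum_congr rfl fun z _ => Nat.card_congr (hfiber z)

theorem natCard_subtype_prod_eq_sum (mid : α → ι) (P : ι → α → Prop) (Q : ι → β → Prop)
    (hmid : ∀ z a, P z a → mid a = z) (hmem : ∀ z a, P z a → z ∈ s)
    (hP : ∀ z, Finite {a // P z a}) (hQ : ∀ z, Finite {b // Q z b}) :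
    Nat.card {ab : α × β // P (mid ab.1) ab.1 ∧ Q (mid ab.1) ab.2} =
      ∑ z : s, Nat.card {a // P z a} * Nat.card {b // Q z b} := by
  have hfiber (z : ι) : {ab : α × β // (P (mid ab.1) ab.1 ∧ Q (mid ab.1) ab.2) ∧ mid ab.1 = z}
      ≃ {a // P z a} × {b // Q z b} :=
    (Equiv.subtypeEquivRight fun ab => ⟨fun ⟨h, hz⟩ => hz ▸ h,
      fun h => ⟨hmid z _ h.1 ▸ h, hmid z _ h.1⟩⟩).trans Equiv.subtypeProdEquivProd
  rw [natCard_eq_sum_natCard_fiber _ (fun ab => mid ab.1) (fun ab h => hmem _ _ h.1)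
    fun z => .of_equiv _ (hfiber z).symm]
  exact Finset.sum_congr rfl fun z _ => by rw [Nat.card_congr (hfiber z), Nat.card_prod]

theorem natCard_subtype_and_eq_sum (mid : α → ι) (P : ι → α → Prop) (C : ι → Prop)
    (hmid : ∀ z a, P z a → mid a = z) (hmem : ∀ z a, P z a → z ∈ s)
    (hP : ∀ z, Finite {a // P z a}) :
    Nat.card {a // P (mid a) a ∧ C (mid a)} =
      ∑ z : s, Nat.card {a // P z a} * if C z then 1 else 0 := by
  have hfiber (z : ι) : {a // (P (mid a) a ∧ C (mid a)) ∧ mid a = z} ≃ {a // P z a ∧ C z} :=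
    Equiv.subtypeEquivRight fun a => ⟨fun ⟨h, hz⟩ => hz ▸ h,
      fun h => ⟨hmid z _ h.1 ▸ h, hmid z _ h.1⟩⟩
  have hfin (z : ι) : Finite {a // P z a ∧ C z} :=
    .of_injective _ (Subtype.impEmbedding _ _ fun a h => h.1 : _ ↪ {a // P z a}).injective
  rw [natCard_eq_sum_natCard_fiber _ mid (fun a h => hmem _ _ h.1)
    fun z => .of_equiv _ (hfiber z).symm]
  refine Finset.sum_congr rfl fun z _ => ?_
  rw [Nat.card_congr (hfiber z)]
  by_cases hC : C z <;> simp [hC]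

theorem natCard_eq_ite_of_iff {P : α → Prop} (C : Prop) (a : α) (h : ∀ p, P p ↔ C ∧ p = a) :
    Nat.card {p // P p} = if C then 1 else 0 := by
  simp_rw [h]
  by_cases hC : C <;> simp [hC]

end Counting

theorem Matrix.commute_mul_mul_of_commute {m n R : Type*} [Fintype m] [Fintype n] [Semiring R]
    (X : Matrix m n R) (Y : Matrix n m R) {A B : Matrix m m R}
    (hA : Commute A (X * Y)) (hB : Commute B (X * Y)) (hAB : Commute A B) :
    Commute (Y * A * X) (Y * B * X) := by
  have key : A * (X * Y) * B = B * (X * Y) * A := by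
    rw [hA.eq, Matrix.mul_assoc, hAB.eq, ← Matrix.mul_assoc, hB.eq]
  calc Y * A * X * (Y * B * X) = Y * (A * (X * Y) * B) * X := by simp only [Matrix.mul_assoc]
    _ = Y * (B * (X * Y) * A) * X := by rw [key]
    _ = Y * B * X * (Y * A * X) := by simp only [Matrix.mul_assoc]

namespace RootedGraph

variable {V : Type*} (R : RootedGraph V)

structure IsLevelWalk (h : ℕ → ℕ) (L : ℕ) (x y : V) (p : ℕ → V) : Prop where
  start : p 0 = x
  finish : ∀ j, L ≤ j → p j = y
  adj : ∀ j < L, R.G.Adj (p j) (p (j + 1))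
  mem : ∀ j ≤ L, p j ∈ R.sphere (h j)

noncomputable def walkCount (h : ℕ → ℕ) (L : ℕ) (x y : V) : ℕ :=
  Nat.card {p // R.IsLevelWalk h L x y p}

variable {R}

theorem finite_isLevelWalk (h : ℕ → ℕ) (L : ℕ) (x y : V) :
    Finite {p // R.IsLevelWalk h L x y p} := by
  have : ∀ j : Fin (L + 1), Finite (R.sphere (h j)) := fun j => (R.sphereFin (h j)).to_subtype
  refine .of_injective (fun p (j : Fin (L + 1)) => (⟨p.1 j, p.2.mem j (by omega)⟩ : R.sphere (h j)))
    fun p q hpq => Subtype.ext <| funext fun j => ?_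
  by_cases hj : j ≤ L
  · exact congrArg Subtype.val (congrFun hpq ⟨j, by omega⟩)
  · rw [p.2.finish j (by omega), q.2.finish j (by omega)]

namespace IsLevelWalk

variable {h h' : ℕ → ℕ} {L m M : ℕ} {x y z : V} {p q : ℕ → V}

theorem take (hp : R.IsLevelWalk h (m + M) x y p) :
    R.IsLevelWalk h m x (p m) (fun j => p (min j m)) where
  start := by simpa using hp.start
  finish j hj := by rw [min_eq_right hj]
  adj j hj := by
    rw [min_eq_left (by omega), min_eq_left (by omega)]
    exact hp.adj j (by omega)
  mem j hj := by
    rw [min_eq_left hj]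
    exact hp.mem j (by omega)

theorem drop (hp : R.IsLevelWalk h (m + M) x y p) :
    R.IsLevelWalk (fun j => h (m + j)) M (p m) y (fun j => p (m + j)) where
  start := rfl
  finish j hj := hp.finish _ (by omega)
  adj j hj := hp.adj _ (by omega)
  mem j hj := hp.mem _ (by omega)

theorem append (hp : R.IsLevelWalk h m x z p) (hq : R.IsLevelWalk (fun j => h (m + j)) M z y q) :
    R.IsLevelWalk h (m + M) x y (fun j => if j ≤ m then p j else q (j - m)) where
  start := by simpa using hp.start
  finish j hj := by
    split_ifs with hjm
    · rw [hp.finish j (by omega), ← hq.start, hq.finish 0 (by omega)]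
    · exact hq.finish _ (by omega)
  adj j hj := by
    by_cases hjm : j < m
    · rw [if_pos hjm.le, if_pos (show j + 1 ≤ m by omega)]
      exact hp.adj j hjm
    by_cases hjm' : j = m
    · subst hjm'
      rw [if_pos le_rfl, if_neg (by omega), hp.finish j le_rfl, ← hq.start,
        show j + 1 - j = 0 + 1 by omega]
      exact hq.adj 0 (by omega)
    · rw [if_neg (by omega), if_neg (by omega), show j + 1 - m = j - m + 1 by omega]
      exact hq.adj _ (by omega)
  mem j hj := by
    split_ifs with hjm
    · exact hp.mem j hjm
    · simpa [show m + (j - m) = j by omega] using hq.mem (j - m) (by omega)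

theorem end_mem (hp : R.IsLevelWalk h L x y p) : y ∈ R.sphere (h L) :=
  hp.finish L le_rfl ▸ hp.mem L le_rfl

theorem congr_level (hp : R.IsLevelWalk h L x y p) (hh' : ∀ j ≤ L, h j = h' j) :
    R.IsLevelWalk h' L x y p where
  start := hp.start
  finish := hp.finish
  adj := hp.adj
  mem j hj := hh' j hj ▸ hp.mem j hj

theorem reverse (hp : R.IsLevelWalk h L x y p) (hh' : ∀ j ≤ L, h' j = h (L - j)) :
    R.IsLevelWalk h' L y x (fun j => p (L - j)) where
  start := hp.finish _ (by omega)
  finish j hj := by rw [show L - j = 0 by omega, hp.start]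
  adj j hj := by
    have := hp.adj (L - (j + 1)) (by omega)
    rw [show L - (j + 1) + 1 = L - j by omega] at this
    exact this.symm
  mem j hj := hh' j hj ▸ hp.mem _ (by omega)

end IsLevelWalk

def splitWalkEquiv (h : ℕ → ℕ) (m M : ℕ) (x y : V) :
    {p // R.IsLevelWalk h (m + M) x y p} ≃
      {pq : (ℕ → V) × (ℕ → V) // R.IsLevelWalk h m x (pq.1 m) pq.1 ∧
        R.IsLevelWalk (fun j => h (m + j)) M (pq.1 m) y pq.2} where
  toFun p := ⟨(fun j => p.1 (min j m), fun j => p.1 (m + j)), by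
    simpa using p.2.take, by simpa using p.2.drop⟩
  invFun pq := ⟨fun j => if j ≤ m then pq.1.1 j else pq.1.2 (j - m), pq.2.1.append pq.2.2⟩
  left_inv p := Subtype.ext <| funext fun j => by
    show (if j ≤ m then p.1 (min j m) else p.1 (m + (j - m))) = p.1 j
    split_ifs with hj
    · rw [min_eq_left hj]
    · rw [show m + (j - m) = j by omega]
  right_inv pq := by
    obtain ⟨⟨p, q⟩, hp, hq⟩ := pq
    dsimp only at hp hq
    refine Subtype.ext (Prod.ext (funext fun j => ?_) (funext fun j => ?_))
    · simp only [if_pos (min_le_right j m)]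
      rcases le_total j m with hj | hj
      · rw [min_eq_left hj]
      · rw [min_eq_right hj, hp.finish j hj]
    · simp only
      split_ifs with hj
      · rw [show j = 0 by omega, hq.start, Nat.add_zero]
      · rw [show m + j - m = j by omega]

-- The sum ranges over `R.sphere a` for any `a = h m`, sparing callers a cast along `h m = a`.
theorem walkCount_add (h : ℕ → ℕ) (m M : ℕ) {a : ℕ} (ha : h m = a) (x y : V) :
    R.walkCount h (m + M) x y =
      ∑ z : R.sphere a, R.walkCount h m x z * R.walkCount (fun j => h (m + j)) M z y := by
  subst ha
  rw [walkCount, Nat.card_congr (splitWalkEquiv h m M x y)]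
  exact natCard_subtype_prod_eq_sum (s := R.sphere (h m)) (fun p => p m)
    (fun z p => R.IsLevelWalk h m x z p) (fun z q => R.IsLevelWalk _ M z y q)
    (fun _ _ hp => hp.finish m le_rfl) (fun _ _ hp => hp.end_mem)
    (fun _ => finite_isLevelWalk ..) (fun _ => finite_isLevelWalk ..)

theorem walkCount_congr {h h' : ℕ → ℕ} {L : ℕ} (hh' : ∀ j ≤ L, h j = h' j) (x y : V) :
    R.walkCount h L x y = R.walkCount h' L x y :=
  Nat.card_congr <| Equiv.subtypeEquivRight fun _ =>
    ⟨fun hp => hp.congr_level hh', fun hp => hp.congr_level fun j hj => (hh' j hj).symm⟩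

theorem walkCount_reverse {h h' : ℕ → ℕ} {L : ℕ} (hh' : ∀ j ≤ L, h' j = h (L - j)) (x y : V) :
    R.walkCount h' L y x = R.walkCount h L x y := by
  have hh (j : ℕ) (hj : j ≤ L) : h j = h' (L - j) := by rw [hh' _ (by omega), Nat.sub_sub_self hj]
  have hinv {h : ℕ → ℕ} {x y : V} (p : {p // R.IsLevelWalk h L x y p}) :
      (fun j => p.1 (L - (L - j))) = p.1 := funext fun j => by
    rcases le_total j L with hj | hj
    · rw [Nat.sub_sub_self hj]
    · rw [show L - (L - j) = L by omega, p.2.finish L le_rfl, p.2.finish j hj]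
  exact Nat.card_congr
    { toFun := fun q => ⟨fun j => q.1 (L - j), q.2.reverse hh⟩
      invFun := fun p => ⟨fun j => p.1 (L - j), p.2.reverse hh'⟩
      left_inv := fun q => Subtype.ext (hinv q)
      right_inv := fun p => Subtype.ext (hinv p) }

theorem walkCount_zero {h : ℕ → ℕ} {x : V} (hx : x ∈ R.sphere (h 0)) (y : V) :
    R.walkCount h 0 x y = if x = y then 1 else 0 := by
  refine natCard_eq_ite_of_iff _ (fun _ => y) fun p => ⟨fun hp => ⟨?_, ?_⟩, ?_⟩
  · rw [← hp.start, hp.finish 0 le_rfl]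
  · exact funext fun j => hp.finish j (Nat.zero_le j)
  · rintro ⟨rfl, rfl⟩
    exact ⟨rfl, fun _ _ => rfl, fun j hj => absurd hj (Nat.not_lt_zero j),
      fun j hj => by rwa [Nat.le_zero.1 hj]⟩

theorem walkCount_one {h : ℕ → ℕ} {x y : V} (hx : x ∈ R.sphere (h 0)) (hy : y ∈ R.sphere (h 1)) :
    R.walkCount h 1 x y = if R.G.Adj x y then 1 else 0 := by
  refine natCard_eq_ite_of_iff _ (fun j => if j = 0 then x else y) fun p => ⟨fun hp => ⟨?_, ?_⟩, ?_⟩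
  · simpa [hp.start, hp.finish 1 le_rfl] using hp.adj 0 Nat.one_pos
  · funext j
    split_ifs with hj
    · rw [hj, hp.start]
    · exact hp.finish j (by omega)
  · rintro ⟨hxy, rfl⟩
    refine ⟨rfl, fun j hj => if_neg (by omega), fun j hj => ?_, fun j hj => ?_⟩
    · simpa [show j = 0 by omega] using hxy
    · interval_cases j <;> simpa

theorem walkCount_add_two {h h' : ℕ → ℕ} {L a b : ℕ} (hh' : ∀ j ≤ L, h (1 + j) = h' j)
    (ha : h' 0 = a) (hb : h' L = b) {x y : V} (hx : x ∈ R.sphere (h 0))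
    (hy : y ∈ R.sphere (h (L + 2))) :
    R.walkCount h (L + 2) x y = ∑ w : R.sphere a, (if R.G.Adj x w then 1 else 0) *
      ∑ w' : R.sphere b, R.walkCount h' L w w' * if R.G.Adj w' y then 1 else 0 := by
  have h1 : h 1 = a := (hh' 0 (Nat.zero_le L)).trans ha
  have hL : h (1 + L) = b := (hh' L le_rfl).trans hb
  rw [show L + 2 = 1 + (L + 1) by omega, walkCount_add h 1 (L + 1) h1]
  refine Finset.sum_congr rfl fun w _ => ?_
  rw [walkCount_one hx (h1 ▸ w.2), walkCount_add _ L 1 hL]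
  refine congrArg _ (Finset.sum_congr rfl fun w' _ => ?_)
  rw [walkCount_congr hh', walkCount_one (hL ▸ w'.2)
    (by simpa [show 1 + (L + 1) = L + 2 by omega] using hy)]

/-- The radius of the sphere containing the `j`-th vertex of a `k`-forward path from `S_n`. -/
def forwardLevel (n k j : ℕ) : ℕ := n + min j (2 * k - j)

/-- The radius of the sphere containing the `j`-th vertex of a `k`-backward path from `S_n`. -/
def backwardLevel (n k j : ℕ) : ℕ := n - min j (2 * k - j)

theorem isForwardPath_iff {n k : ℕ} {x y : V} {p : ℕ → V} :
    R.IsForwardPath n k x y p ↔ R.IsLevelWalk (forwardLevel n k) (2 * k) x y p := by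
  constructor
  · rintro ⟨hstart, hfinish, hadj, hup, hdown⟩
    refine ⟨hstart, hfinish, hadj, fun j hj => ?_⟩
    rcases le_total j k with hjk | hjk
    · rw [forwardLevel, show min j (2 * k - j) = j by omega]
      exact hup j hjk
    · rw [forwardLevel, show min j (2 * k - j) = 2 * k - j by omega]
      exact hdown j hjk hj
  · rintro ⟨hstart, hfinish, hadj, hmem⟩
    refine ⟨hstart, hfinish, hadj, fun j hj => ?_, fun j hjk hj => ?_⟩
    · simpa [forwardLevel, show min j (2 * k - j) = j by omega] using hmem j (by omega)
    · simpa [forwardLevel, show min j (2 * k - j) = 2 * k - j by omega] using hmem j hj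

theorem isBackwardPath_iff {n k : ℕ} {x y : V} {p : ℕ → V} :
    R.IsBackwardPath n k x y p ↔ k ≤ n ∧ R.IsLevelWalk (backwardLevel n k) (2 * k) x y p := by
  constructor
  · rintro ⟨hkn, hstart, hfinish, hadj, hdown, hup⟩
    refine ⟨hkn, hstart, hfinish, hadj, fun j hj => ?_⟩
    rcases le_total j k with hjk | hjk
    · rw [backwardLevel, show min j (2 * k - j) = j by omega]
      exact hdown j hjk
    · rw [backwardLevel, show min j (2 * k - j) = 2 * k - j by omega]
      exact hup j hjk hj
  · rintro ⟨hkn, hstart, hfinish, hadj, hmem⟩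
    refine ⟨hkn, hstart, hfinish, hadj, fun j hj => ?_, fun j hjk hj => ?_⟩
    · simpa [backwardLevel, show min j (2 * k - j) = j by omega] using hmem j (by omega)
    · simpa [backwardLevel, show min j (2 * k - j) = 2 * k - j by omega] using hmem j hj

theorem chainProd_apply (n : ℕ) :
    ∀ (l : ℕ) (w : R.sphere (n + l)) (u : R.sphere n),
      R.chainProd n l w u = R.walkCount (n + ·) l u w
  | 0, w, u => by
    rw [walkCount_zero u.2, chainProd, Matrix.one_apply]
    simp only [Subtype.ext_iff, eq_comm]
  | l + 1, w, u => by
    rw [chainProd, Matrix.mul_apply, walkCount_add _ l 1 (a := n + l) rfl]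
    refine Finset.sum_congr rfl fun z _ => ?_
    rw [chainProd_apply n l z u, walkCount_one (by simp) w.2, Esub,
      R.G.adj_comm, mul_comm]

theorem lamPlus_apply (n k : ℕ) (u v : R.sphere n) :
    R.lamPlus n k u v = R.walkCount (forwardLevel n k) (2 * k) u v := by
  rw [lamPlus, Matrix.mul_apply, two_mul,
    walkCount_add _ k k (a := n + k) (by unfold forwardLevel; omega)]
  refine Finset.sum_congr rfl fun w _ => ?_
  have hup : ∀ j ≤ k, forwardLevel n k j = n + j := fun j hj => by
    simp only [forwardLevel]; omega
  have hdown : ∀ j ≤ k, forwardLevel n k (k + j) = n + (k - j) := fun j hj => by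
    simp only [forwardLevel]; omega
  rw [Matrix.transpose_apply, chainProd_apply, chainProd_apply, walkCount_congr hup,
    walkCount_reverse hdown]

theorem lamMinusAll_zero (n : ℕ) : R.lamMinusAll n 0 = 1 := by
  cases n <;> rfl

theorem lamMinusAll_of_lt : ∀ {n l : ℕ}, n < l → R.lamMinusAll n l = 1
  | _, 0, h => absurd h (Nat.not_lt_zero _)
  | 0, _ + 1, _ => rfl
  | _ + 1, _ + 1, h => by rw [lamMinusAll, if_neg (by omega)]

theorem lamMinusAll_succ {m l : ℕ} (h : l ≤ m) :
    R.lamMinusAll (m + 1) (l + 1) = R.Esub m * R.lamMinusAll m l * (R.Esub m)ᵀ := by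
  rw [lamMinusAll, if_pos (by omega)]

theorem lamMinusAll_apply :
    ∀ {l n : ℕ}, l ≤ n → ∀ u v : R.sphere n,
      R.lamMinusAll n l u v = R.walkCount (backwardLevel n l) (2 * l) u v
  | 0, n, _, u, v => by
    rw [lamMinusAll_zero, Matrix.one_apply, walkCount_zero (by simp [backwardLevel])]
    simp only [Subtype.ext_iff]
  | l + 1, m + 1, hl, u, v => by
    rw [lamMinusAll_succ (by omega), Matrix.mul_assoc, Matrix.mul_apply, mul_add, mul_one,
      walkCount_add_two (h' := backwardLevel m l) (a := m) (b := m)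
        (fun j hj => by simp only [backwardLevel]; omega) (by simp [backwardLevel])
        (by simp [backwardLevel]) (by simp [backwardLevel])
        (by simp [backwardLevel, show 2 * (l + 1) - (2 * l + 2) = 0 by omega])]
    refine Finset.sum_congr rfl fun w _ => ?_
    rw [Matrix.mul_apply]
    refine congrArg₂ _ rfl (Finset.sum_congr rfl fun w' _ => ?_)
    rw [lamMinusAll_apply (by omega), Matrix.transpose_apply, Esub, R.G.adj_comm v.1]

theorem lamPlus_succ (n k : ℕ) :
    R.lamPlus n (k + 1) = (R.Esub n)ᵀ * R.lamPlus (n + 1) k * R.Esub n := by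
  ext u v
  rw [lamPlus_apply, Matrix.mul_assoc, Matrix.mul_apply, mul_add, mul_one,
    walkCount_add_two (h' := forwardLevel (n + 1) k) (a := n + 1) (b := n + 1)
      (fun j hj => by simp only [forwardLevel]; omega) (by simp [forwardLevel])
      (by simp only [forwardLevel]; omega) (by simp [forwardLevel])
      (by simp [forwardLevel, show 2 * (k + 1) - (2 * k + 2) = 0 by omega])]
  refine Finset.sum_congr rfl fun w _ => ?_
  rw [Matrix.mul_apply, Matrix.transpose_apply, Esub, R.G.adj_comm u.1]
  refine congrArg₂ _ rfl (Finset.sum_congr rfl fun w' _ => ?_)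
  rw [lamPlus_apply]
  rfl

theorem lamPlus_zero (n : ℕ) : R.lamPlus n 0 = 1 := by
  simp [lamPlus, chainProd]

theorem lamPlus_one (n : ℕ) : R.lamPlus n 1 = (R.Esub n)ᵀ * R.Esub n := by
  simp [lamPlus, chainProd]

theorem lamMinusAll_one (m : ℕ) : R.lamMinusAll (m + 1) 1 = R.Esub m * (R.Esub m)ᵀ := by
  rw [lamMinusAll_succ (Nat.zero_le m), lamMinusAll_zero, Matrix.mul_one]

variable {n k : ℕ} {x y : V} {p : ℕ → V}

theorem IsForwardPath.start_mem_sphere (hp : R.IsForwardPath n k x y p) : x ∈ R.sphere n :=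
  hp.1 ▸ hp.2.2.2.1 0 (Nat.zero_le k)

theorem IsForwardPath.end_mem_sphere (hp : R.IsForwardPath n k x y p) : y ∈ R.sphere n := by
  simpa [hp.2.1 (2 * k) le_rfl] using hp.2.2.2.2 (2 * k) (by omega) le_rfl

theorem IsBackwardPath.start_mem_sphere (hp : R.IsBackwardPath n k x y p) : x ∈ R.sphere n :=
  hp.2.1 ▸ hp.2.2.2.2.1 0 (Nat.zero_le k)

theorem IsBackwardPath.end_mem_sphere (hp : R.IsBackwardPath n k x y p) : y ∈ R.sphere n := by
  simpa [hp.2.2.1 (2 * k) le_rfl] using hp.2.2.2.2.2 (2 * k) (by omega) le_rfl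

theorem finite_isForwardPath (n k : ℕ) (x y : V) : Finite {p // R.IsForwardPath n k x y p} :=
  have := finite_isLevelWalk (R := R) (forwardLevel n k) (2 * k) x y
  .of_equiv _ (Equiv.subtypeEquivRight fun _ => isForwardPath_iff).symm

theorem finite_isBackwardPath (n k : ℕ) (x y : V) : Finite {p // R.IsBackwardPath n k x y p} :=
  have := finite_isLevelWalk (R := R) (backwardLevel n k) (2 * k) x y
  .of_injective _ (Subtype.impEmbedding _ _ fun _ hp => (isBackwardPath_iff.1 hp).2).injective

theorem lamPlus_apply_eq_card (u v : R.sphere n) :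
    R.lamPlus n k u v = Nat.card {p // R.IsForwardPath n k u v p} := by
  rw [lamPlus_apply]
  exact Nat.card_congr (Equiv.subtypeEquivRight fun _ => isForwardPath_iff.symm)

theorem lamMinusAll_apply_eq_card {l : ℕ} (hl : l ≤ n) (u v : R.sphere n) :
    R.lamMinusAll n l u v = Nat.card {q // R.IsBackwardPath n l u v q} := by
  rw [lamMinusAll_apply hl]
  exact Nat.card_congr <| Equiv.subtypeEquivRight fun _ => by
    rw [isBackwardPath_iff, and_iff_right hl]

theorem fbCount_eq {l : ℕ} (hl : l ≤ n) (u v : R.sphere n) :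
    R.fbCount n k l u v = (R.lamPlus n k * R.lamMinusAll n l) u v := by
  refine (natCard_subtype_prod_eq_sum (s := R.sphere n) (fun p => p (2 * k))
    (fun z p => R.IsForwardPath n k u z p) (fun z q => R.IsBackwardPath n l z v q)
    (fun _ _ hp => hp.2.1 _ le_rfl) (fun _ _ hp => hp.end_mem_sphere)
    (fun _ => finite_isForwardPath ..) (fun _ => finite_isBackwardPath ..)).trans ?_
  rw [Matrix.mul_apply]
  exact Finset.sum_congr rfl fun z _ => by rw [lamPlus_apply_eq_card, lamMinusAll_apply_eq_card hl]

theorem bfCount_eq {l : ℕ} (hl : l ≤ n) (u v : R.sphere n) :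
    R.bfCount n l k u v = (R.lamMinusAll n l * R.lamPlus n k) u v := by
  refine (natCard_subtype_prod_eq_sum (s := R.sphere n) (fun p => p (2 * l))
    (fun z p => R.IsBackwardPath n l u z p) (fun z q => R.IsForwardPath n k z v q)
    (fun _ _ hp => hp.2.2.1 _ le_rfl) (fun _ _ hp => hp.end_mem_sphere)
    (fun _ => finite_isBackwardPath ..) (fun _ => finite_isForwardPath ..)).trans ?_
  rw [Matrix.mul_apply]
  exact Finset.sum_congr rfl fun z _ => by rw [lamPlus_apply_eq_card, lamMinusAll_apply_eq_card hl]

theorem tailedFCount_eq (u v : R.sphere n) :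
    R.tailedFCount n k u v = (R.lamPlus n k * R.Vsub n) u v := by
  refine (natCard_subtype_and_eq_sum (s := R.sphere n) (fun p => p (2 * k))
    (fun z p => R.IsForwardPath n k u z p) (fun z => R.G.Adj z v)
    (fun _ _ hp => hp.2.1 _ le_rfl) (fun _ _ hp => hp.end_mem_sphere)
    (fun _ => finite_isForwardPath ..)).trans ?_
  rw [Matrix.mul_apply]
  exact Finset.sum_congr rfl fun z _ => by rw [lamPlus_apply_eq_card]; rfl

theorem headedFCount_eq (u v : R.sphere n) :
    R.headedFCount n k u v = (R.Vsub n * R.lamPlus n k) u v := by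
  refine (Nat.card_congr (Equiv.subtypeEquivRight fun _ => and_comm)).trans <|
    (natCard_subtype_and_eq_sum (s := R.sphere n) (fun p => p 0)
    (fun z p => R.IsForwardPath n k z v p) (fun z => R.G.Adj u z)
    (fun _ _ hp => hp.1) (fun _ _ hp => hp.start_mem_sphere)
    (fun _ => finite_isForwardPath ..)).trans ?_
  rw [Matrix.mul_apply]
  exact Finset.sum_congr rfl fun z _ => by rw [lamPlus_apply_eq_card, mul_comm]; rfl

theorem tailedBCount_eq (hk : k ≤ n) (u v : R.sphere n) :
    R.tailedBCount n k u v = (R.lamMinusAll n k * R.Vsub n) u v := by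
  refine (natCard_subtype_and_eq_sum (s := R.sphere n) (fun p => p (2 * k))
    (fun z p => R.IsBackwardPath n k u z p) (fun z => R.G.Adj z v)
    (fun _ _ hp => hp.2.2.1 _ le_rfl) (fun _ _ hp => hp.end_mem_sphere)
    (fun _ => finite_isBackwardPath ..)).trans ?_
  rw [Matrix.mul_apply]
  exact Finset.sum_congr rfl fun z _ => by rw [lamMinusAll_apply_eq_card hk]; rfl

theorem headedBCount_eq (hk : k ≤ n) (u v : R.sphere n) :
    R.headedBCount n k u v = (R.Vsub n * R.lamMinusAll n k) u v := by
  refine (Nat.card_congr (Equiv.subtypeEquivRight fun _ => and_comm)).trans <|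
    (natCard_subtype_and_eq_sum (s := R.sphere n) (fun p => p 0)
    (fun z p => R.IsBackwardPath n k z v p) (fun z => R.G.Adj u z)
    (fun _ _ hp => hp.2.1) (fun _ _ hp => hp.start_mem_sphere)
    (fun _ => finite_isBackwardPath ..)).trans ?_
  rw [Matrix.mul_apply]
  exact Finset.sum_congr rfl fun z _ => by rw [lamMinusAll_apply_eq_card hk, mul_comm]; rfl

namespace PathCommuting

theorem commute_lamPlus_lamMinusAll (hPC : R.PathCommuting) (n k l : ℕ) :
    Commute (R.lamPlus n k) (R.lamMinusAll n l) := by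
  rcases le_or_gt l n with hl | hl
  · refine Matrix.ext fun u v => ?_
    rw [← fbCount_eq hl, ← bfCount_eq hl]
    exact (hPC n u u.2 v v.2 k l).1
  · rw [lamMinusAll_of_lt hl]
    exact .one_right _

theorem commute_vsub_lamPlus (hPC : R.PathCommuting) (n k : ℕ) :
    Commute (R.Vsub n) (R.lamPlus n k) :=
  Matrix.ext fun u v => by
    rw [← headedFCount_eq, ← tailedFCount_eq]
    exact (hPC n u u.2 v v.2 k 0).2.1.symm

theorem commute_vsub_lamMinusAll (hPC : R.PathCommuting) (n l : ℕ) :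
    Commute (R.Vsub n) (R.lamMinusAll n l) := by
  rcases le_or_gt l n with hl | hl
  · refine Matrix.ext fun u v => ?_
    rw [← headedBCount_eq hl, ← tailedBCount_eq hl]
    exact (hPC n u u.2 v v.2 l 0).2.2.symm
  · rw [lamMinusAll_of_lt hl]
    exact .one_right _

theorem commute_lamPlus_lamPlus (hPC : R.PathCommuting) :
    ∀ k l n : ℕ, Commute (R.lamPlus n k) (R.lamPlus n l)
  | 0, _, _ => by rw [lamPlus_zero]; exact .one_left _
  | _ + 1, 0, _ => by rw [lamPlus_zero]; exact .one_right _
  | k + 1, l + 1, n => by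
    have hE : ∀ j, Commute (R.lamPlus (n + 1) j) (R.Esub n * (R.Esub n)ᵀ) := fun j => by
      rw [← lamMinusAll_one]
      exact hPC.commute_lamPlus_lamMinusAll _ _ _
    rw [lamPlus_succ, lamPlus_succ]
    exact Matrix.commute_mul_mul_of_commute _ _ (hE k) (hE l)
      (hPC.commute_lamPlus_lamPlus k l (n + 1))

theorem commute_lamMinusAll_lamMinusAll (hPC : R.PathCommuting) :
    ∀ k l n : ℕ, Commute (R.lamMinusAll n k) (R.lamMinusAll n l)
  | 0, _, _ => by rw [lamMinusAll_zero]; exact .one_left _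
  | _ + 1, 0, _ => by rw [lamMinusAll_zero]; exact .one_right _
  | k + 1, l + 1, n => by
    rcases lt_or_ge n (k + 1) with hk | hk
    · rw [lamMinusAll_of_lt hk]; exact .one_left _
    rcases lt_or_ge n (l + 1) with hl | hl
    · rw [lamMinusAll_of_lt hl]; exact .one_right _
    obtain ⟨m, rfl⟩ : ∃ m, n = m + 1 := ⟨n - 1, by omega⟩
    have hE : ∀ j, Commute (R.lamMinusAll m j) ((R.Esub m)ᵀ * R.Esub m) := fun j => by
      rw [← lamPlus_one]
      exact (hPC.commute_lamPlus_lamMinusAll _ _ _).symm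
    rw [lamMinusAll_succ (by omega), lamMinusAll_succ (by omega)]
    exact Matrix.commute_mul_mul_of_commute _ _ (hE k) (hE l)
      (hPC.commute_lamMinusAll_lamMinusAll k l m)

end PathCommuting

theorem pathCommuting_of_commute (hVp : ∀ n k, Commute (R.Vsub n) (R.lamPlus n k))
    (hVm : ∀ n l, Commute (R.Vsub n) (R.lamMinusAll n l))
    (hpm : ∀ n k l, Commute (R.lamPlus n k) (R.lamMinusAll n l)) : R.PathCommuting := by
  intro n x hx y hy k l
  lift x to R.sphere n using hx
  lift y to R.sphere n using hy
  refine ⟨?_, ?_, ?_⟩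
  · rcases le_or_gt l n with hl | hl
    · rw [fbCount_eq hl, (hpm n k l).eq, bfCount_eq hl]
    · have hB : ∀ {a b q}, ¬ R.IsBackwardPath n l a b q := fun hq => hl.not_ge hq.1
      simp [fbCount, bfCount, hB]
  · rw [tailedFCount_eq, ← (hVp n k).eq, headedFCount_eq]
  · rcases le_or_gt k n with hk | hk
    · rw [tailedBCount_eq hk, ← (hVm n k).eq, headedBCount_eq hk]
    · have hB : ∀ {a b q}, ¬ R.IsBackwardPath n k a b q := fun hq => hk.not_ge hq.1
      simp [tailedBCount, headedBCount, hB]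

end RootedGraph

/-- a rooted graph is path commuting iff for each n the matrices
V_n, Λ_{n,+j}, Λ_{n,-j} (j ≥ 0) all pairwise commute. -/
theorem stmt9 {V : Type*} (R : RootedGraph V) :
    R.PathCommuting ↔
    ∀ n : ℕ, ∀ A B : Matrix ↥(R.sphere n) ↥(R.sphere n) ℕ,
      (A = R.Vsub n ∨ (∃ j, A = R.lamPlus n j) ∨ (∃ j, A = R.lamMinusAll n j)) →
      (B = R.Vsub n ∨ (∃ j, B = R.lamPlus n j) ∨ (∃ j, B = R.lamMinusAll n j)) →
      A * B = B * A := by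
  constructor
  · intro hPC n A B hA hB
    rcases hA with rfl | ⟨j, rfl⟩ | ⟨j, rfl⟩ <;> rcases hB with rfl | ⟨j', rfl⟩ | ⟨j', rfl⟩
    · rfl
    · exact (hPC.commute_vsub_lamPlus n j').eq
    · exact (hPC.commute_vsub_lamMinusAll n j').eq
    · exact (hPC.commute_vsub_lamPlus n j).symm.eq
    · exact (hPC.commute_lamPlus_lamPlus j j' n).eq
    · exact (hPC.commute_lamPlus_lamMinusAll n j j').eq
    · exact (hPC.commute_vsub_lamMinusAll n j).symm.eq
    · exact (hPC.commute_lamPlus_lamMinusAll n j' j).symm.eq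
    · exact (hPC.commute_lamMinusAll_lamMinusAll j j' n).eq
  · intro H
    exact RootedGraph.pathCommuting_of_commute
      (fun n k => H n _ _ (.inl rfl) (.inr (.inl ⟨k, rfl⟩)))
      (fun n l => H n _ _ (.inl rfl) (.inr (.inr ⟨l, rfl⟩)))
      (fun n k l => H n _ _ (.inr (.inl ⟨k, rfl⟩)) (.inr (.inr ⟨l, rfl⟩)))
end

section
/- Let G be a rooted path commuting graph. Then for any n, j ≥ 0, the matrix Λ_{n,+j} = E_n^T … E_{n+j}^T E_{n+j} … E_n commutes with E_n^T E_{n+1}^T … E_{n+j}^T V_{n+j} E_{n+j} … E_{n+1} E_n, and for any n ≥ 1 and j ≤ n, Λ_{n,-j} commutes with E_{n-1} … E_{n-j} V_{n-j} E_{n-j}^T … E_{n-1}^T. -/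
open SimpleGraph Matrix

attribute [local instance] Classical.propDecidable

section Aux

lemma auxCardSigma {ι : Type*} [Fintype ι] (f : ι → Type*) [∀ i, Finite (f i)] :
    Nat.card (Σ i, f i) = ∑ i, Nat.card (f i) := by
  letI : ∀ i, Fintype (f i) := fun i => Fintype.ofFinite _
  simp [Nat.card_eq_fintype_card]

lemma auxFiniteAnd {α : Type*} {A B : α → Prop} (h : Finite {a : α // A a}) :
    Finite {a : α // A a ∧ B a} :=
  Finite.of_injective (fun a => (⟨a.1, a.2.1⟩ : {a : α // A a})) (by
    intro a b hab
    simp only [Subtype.mk.injEq] at hab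
    exact Subtype.ext hab)

lemma auxCardAndRight {α : Type*} (A : α → Prop) (B : Prop) :
    Nat.card {a : α // A a ∧ B} = if B then Nat.card {a : α // A a} else 0 := by
  by_cases hB : B
  · rw [if_pos hB]
    exact Nat.card_congr (Equiv.subtypeEquivRight (fun a => and_iff_left hB))
  · rw [if_neg hB]
    have : IsEmpty {a : α // A a ∧ B} := ⟨fun a => hB a.2.2⟩
    exact Nat.card_of_isEmpty

lemma auxCardAndLeft {α : Type*} (A : α → Prop) (B : Prop) :
    Nat.card {a : α // B ∧ A a} = if B then Nat.card {a : α // A a} else 0 := by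
  rw [← auxCardAndRight]
  exact Nat.card_congr (Equiv.subtypeEquivRight (fun a => and_comm))

/-- Decompose a count of objects according to the value of a classifying map
landing in a finite set. -/
lemma auxCardFiberSum {α W : Type*} {S : Set W} [Fintype ↥S] (P : α → Prop) (f : α → W)
    (hcov : ∀ a, P a → f a ∈ S)
    (hfin : ∀ w : ↥S, Finite {a : α // P a ∧ f a = w.1}) :
    Nat.card {a : α // P a} = ∑ w : ↥S, Nat.card {a : α // P a ∧ f a = w.1} := by
  haveI := hfin
  rw [← auxCardSigma]
  apply Nat.card_congr
  refine ⟨fun a => ⟨⟨f a.1, hcov a.1 a.2⟩, a.1, a.2, rfl⟩, fun x => ⟨x.2.1, x.2.2.1⟩,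
    fun a => rfl, fun x => ?_⟩
  obtain ⟨⟨wv, hw⟩, a, hP, hfa⟩ := x
  dsimp only at hfa
  subst hfa
  rfl

end Aux

namespace RootedGraph

variable {V : Type*} (R : RootedGraph V)

lemma sphere_congr {a b : ℕ} (h : a = b) {v : V} (hv : v ∈ R.sphere a) :
    v ∈ R.sphere b := h ▸ hv

/-- An ascending path from `v` (in sphere `m`) to `u` (in sphere `m+l`). -/
def IsUpPath (m l : ℕ) (v u : V) (p : ℕ → V) : Prop :=
  p 0 = v ∧ (∀ j, l ≤ j → p j = u) ∧ (∀ j, j < l → R.G.Adj (p j) (p (j+1))) ∧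
  (∀ j, j ≤ l → p j ∈ R.sphere (m + j))

lemma upFinite (m l : ℕ) (v u : V) : Finite {p : ℕ → V // R.IsUpPath m l v u p} := by
  apply Finite.of_injective
    (fun p (j : Fin (l+1)) => (⟨p.1 j, p.2.2.2.2 j (Nat.lt_succ_iff.mp j.2)⟩ :
      ↥(R.sphere (m + j))))
  intro p q h
  apply Subtype.ext; funext j
  rcases le_or_gt j l with hj | hj
  · have := congrFun h ⟨j, Nat.lt_succ_of_le hj⟩
    exact congrArg Subtype.val this
  · rw [p.2.2.1 j hj.le, q.2.2.1 j hj.le]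

noncomputable def upCount (m l : ℕ) (v u : V) : ℕ :=
  Nat.card {p : ℕ → V // R.IsUpPath m l v u p}

/-- The fiber of `(l+1)`-up-paths through `w` at level `l`. -/
def upSuccEquiv (m l : ℕ) (v u w : V) (hu : u ∈ R.sphere (m + (l+1))) :
    {p : ℕ → V // R.IsUpPath m (l+1) v u p ∧ p l = w} ≃
      {q : ℕ → V // R.IsUpPath m l v w q ∧ R.G.Adj w u} where
  toFun p := ⟨fun j => p.1 (min j l), by
    obtain ⟨⟨h0, hend, hadj, hsph⟩, hw⟩ := p.2
    refine ⟨⟨?_, ?_, ?_, ?_⟩, ?_⟩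
    · show p.1 (min 0 l) = v
      have e : min 0 l = 0 := by omega
      rw [e]; exact h0
    · intro j hj
      show p.1 (min j l) = w
      have e : min j l = l := by omega
      rw [e]; exact hw
    · intro j hj
      show R.G.Adj (p.1 (min j l)) (p.1 (min (j+1) l))
      have e1 : min j l = j := by omega
      have e2 : min (j+1) l = j + 1 := by omega
      rw [e1, e2]; exact hadj j (by omega)
    · intro j hj
      show p.1 (min j l) ∈ R.sphere (m + j)
      have e : min j l = j := by omega
      rw [e]; exact hsph j (by omega)
    · have h1 := hadj l (by omega)
      rw [hend (l+1) le_rfl, hw] at h1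
      exact h1⟩
  invFun q := ⟨fun j => if j ≤ l then q.1 j else u, by
    obtain ⟨⟨h0, hend, hadj, hsph⟩, hA⟩ := q.2
    refine ⟨⟨?_, ?_, ?_, ?_⟩, ?_⟩
    · show (if 0 ≤ l then q.1 0 else u) = v
      rw [if_pos (Nat.zero_le l)]; exact h0
    · intro j hj
      show (if j ≤ l then q.1 j else u) = u
      rw [if_neg (by omega : ¬ j ≤ l)]
    · intro j hj
      show R.G.Adj (if j ≤ l then q.1 j else u) (if j + 1 ≤ l then q.1 (j+1) else u)
      rcases lt_or_ge j l with h | h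
      · rw [if_pos (by omega : j ≤ l), if_pos (by omega : j + 1 ≤ l)]
        exact hadj j h
      · have hjl : j = l := by omega
        subst hjl
        rw [if_pos le_rfl, if_neg (by omega : ¬ j + 1 ≤ j), hend j le_rfl]
        exact hA
    · intro j hj
      show (if j ≤ l then q.1 j else u) ∈ R.sphere (m + j)
      rcases le_or_gt j l with h | h
      · rw [if_pos h]; exact hsph j h
      · rw [if_neg (by omega : ¬ j ≤ l)]
        have e : j = l + 1 := by omega
        subst e
        exact hu
    · show (if l ≤ l then q.1 l else u) = w
      rw [if_pos le_rfl]; exact hend l le_rfl⟩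
  left_inv p := by
    apply Subtype.ext; funext j
    show (if j ≤ l then p.1 (min j l) else u) = p.1 j
    rcases le_or_gt j l with hj | hj
    · rw [if_pos hj]
      have e : min j l = j := by omega
      rw [e]
    · rw [if_neg (by omega : ¬ j ≤ l)]
      exact (p.2.1.2.1 j (by omega)).symm
  right_inv q := by
    apply Subtype.ext; funext j
    show (if min j l ≤ l then q.1 (min j l) else u) = q.1 j
    rw [if_pos (by omega : min j l ≤ l)]
    rcases le_or_gt j l with hj | hj
    · have e : min j l = j := by omega
      rw [e]
    · have e : min j l = l := by omega
      rw [e, q.2.1.2.1 l le_rfl, q.2.1.2.1 j (by omega)]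

lemma chainProd_apply_s10 (m : ℕ) : ∀ (l : ℕ) (u : ↥(R.sphere (m+l))) (v : ↥(R.sphere m)),
    R.chainProd m l u v = R.upCount m l v.1 u.1 := by
  intro l
  induction l with
  | zero =>
    intro u v
    show (1 : Matrix ↥(R.sphere m) ↥(R.sphere m) ℕ) u v = _
    rw [Matrix.one_apply, upCount]
    by_cases h : u = v
    · subst h
      rw [if_pos rfl]
      symm
      rw [Nat.card_eq_one_iff_unique]
      constructor
      · constructor
        intro p q
        apply Subtype.ext; funext j
        rw [p.2.2.1 j (Nat.zero_le j), q.2.2.1 j (Nat.zero_le j)]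
      · refine ⟨⟨fun _ => u.1, rfl, fun j _ => rfl, fun j hj => absurd hj (by omega), ?_⟩⟩
        intro j hj
        have : j = 0 := by omega
        subst this
        exact u.2
    · rw [if_neg h]
      symm
      have : IsEmpty {p : ℕ → V // R.IsUpPath m 0 v.1 u.1 p} := by
        constructor
        rintro ⟨p, h0, hend, -, -⟩
        exact h (Subtype.ext (by rw [← hend 0 le_rfl, h0]))
      exact Nat.card_of_isEmpty
  | succ l ih =>
    intro u v
    show (R.Esub (m+l) * R.chainProd m l) u v = _
    rw [Matrix.mul_apply]
    have key : R.upCount m (l+1) v.1 u.1 =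
        ∑ w : ↥(R.sphere (m+l)), Nat.card
          {p : ℕ → V // R.IsUpPath m (l+1) v.1 u.1 p ∧ p l = w.1} := by
      apply auxCardFiberSum
      · intro p hp
        exact hp.2.2.2 l (by omega)
      · intro w
        exact auxFiniteAnd (R.upFinite m (l+1) v.1 u.1)
    rw [key]
    apply Finset.sum_congr rfl
    intro w _
    rw [Nat.card_congr (R.upSuccEquiv m l v.1 u.1 w.1 u.2),
      auxCardAndRight (R.IsUpPath m l v.1 w.1) (R.G.Adj w.1 u.1), ih w v]
    simp only [Esub]
    by_cases hA : R.G.Adj w.1 u.1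
    · rw [if_pos hA, if_pos ((R.G.adj_comm u.1 w.1).mpr hA), one_mul]
      rfl
    · rw [if_neg hA, if_neg (fun h => hA ((R.G.adj_comm u.1 w.1).mp h)), zero_mul]

end RootedGraph

namespace RootedGraph

variable {V : Type*} (R : RootedGraph V)

lemma fpFinite (n k : ℕ) (x z : V) :
    Finite {p : ℕ → V // R.IsForwardPath n k x z p} := by
  apply Finite.of_injective (β := (((j : Fin (k+1)) → ↥(R.sphere (n + j.1))) ×
      ((j : Fin (k+1)) → ↥(R.sphere (n + j.1)))))
    (fun p => (fun j => ⟨p.1 j, p.2.2.2.2.1 j (Nat.lt_succ_iff.mp j.2)⟩,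
      fun j => ⟨p.1 (2*k - j),
        R.sphere_congr (by omega)
          (p.2.2.2.2.2 (2*k - j) (by omega) (by omega))⟩))
  intro p q h
  have h1 := congrArg Prod.fst h
  have h2 := congrArg Prod.snd h
  apply Subtype.ext; funext j
  rcases le_or_gt j k with hj | hj
  · have := congrFun h1 ⟨j, by omega⟩
    exact congrArg Subtype.val this
  · rcases le_or_gt j (2*k) with hj' | hj'
    · have := congrArg Subtype.val (congrFun h2 ⟨2*k - j, by omega⟩)
      dsimp only at this
      have e : 2*k - (2*k - j) = j := by omega
      rw [e] at this
      exact this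
    · rw [p.2.2.1 j (by omega), q.2.2.1 j (by omega)]

/-- Splitting a forward path through its midpoint `w`. -/
def fpFiberEquiv (n k : ℕ) (x z w : V) :
    {p : ℕ → V // R.IsForwardPath n k x z p ∧ p k = w} ≃
      {r : ℕ → V // R.IsUpPath n k x w r} × {q : ℕ → V // R.IsUpPath n k z w q} where
  toFun p := (⟨fun j => p.1 (min j k), by
      obtain ⟨⟨h0, hend, hadj, hup, hdown⟩, hpk⟩ := p.2
      refine ⟨?_, ?_, ?_, ?_⟩
      · show p.1 (min 0 k) = x
        rw [show min 0 k = 0 from by omega]; exact h0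
      · intro j hj
        show p.1 (min j k) = w
        rw [show min j k = k from by omega]; exact hpk
      · intro j hj
        show R.G.Adj (p.1 (min j k)) (p.1 (min (j+1) k))
        rw [show min j k = j from by omega, show min (j+1) k = j + 1 from by omega]
        exact hadj j (by omega)
      · intro j hj
        show p.1 (min j k) ∈ R.sphere (n + j)
        rw [show min j k = j from by omega]
        exact hup j hj⟩,
    ⟨fun j => p.1 (2*k - min j k), by
      obtain ⟨⟨h0, hend, hadj, hup, hdown⟩, hpk⟩ := p.2
      refine ⟨?_, ?_, ?_, ?_⟩
      · show p.1 (2*k - min 0 k) = z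
        rw [show 2*k - min 0 k = 2*k from by omega]; exact hend (2*k) le_rfl
      · intro j hj
        show p.1 (2*k - min j k) = w
        rw [show 2*k - min j k = k from by omega]; exact hpk
      · intro j hj
        show R.G.Adj (p.1 (2*k - min j k)) (p.1 (2*k - min (j+1) k))
        have e1 : 2*k - min j k = (2*k - min (j+1) k) + 1 := by omega
        rw [e1]
        exact (hadj (2*k - min (j+1) k) (by omega)).symm
      · intro j hj
        show p.1 (2*k - min j k) ∈ R.sphere (n + j)
        exact R.sphere_congr (by omega)
          (hdown (2*k - min j k) (by omega) (by omega))⟩)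
  invFun rq := ⟨fun j => if j ≤ k then rq.1.1 j else rq.2.1 (2*k - j), by
    obtain ⟨⟨r, h0r, hendr, hadjr, hsphr⟩, ⟨q, h0q, hendq, hadjq, hsphq⟩⟩ := rq
    refine ⟨⟨?_, ?_, ?_, ?_, ?_⟩, ?_⟩
    · show (if 0 ≤ k then r 0 else q (2*k - 0)) = x
      rw [if_pos (Nat.zero_le k)]; exact h0r
    · intro j hj
      show (if j ≤ k then r j else q (2*k - j)) = z
      rcases le_or_gt j k with h | h
      · rw [if_pos h]
        have hk0 : k = 0 := by omega
        have hj0 : j = 0 := by omega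
        subst hk0; subst hj0
        rw [hendr 0 le_rfl, ← hendq 0 le_rfl, h0q]
      · rw [if_neg (by omega : ¬ j ≤ k), show 2*k - j = 0 from by omega]
        exact h0q
    · intro j hj
      show R.G.Adj (if j ≤ k then r j else q (2*k - j))
        (if j + 1 ≤ k then r (j+1) else q (2*k - (j+1)))
      by_cases h1 : j + 1 ≤ k
      · rw [if_pos (by omega : j ≤ k), if_pos h1]
        exact hadjr j (by omega)
      · by_cases h2 : j ≤ k
        · have hjk : j = k := by omega
          subst hjk
          rw [if_pos le_rfl, if_neg h1, hendr j le_rfl]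
          have ha := hadjq (j-1) (by omega)
          rw [show j - 1 + 1 = j from by omega, hendq j le_rfl] at ha
          rw [show 2*j - (j+1) = j - 1 from by omega]
          exact ha.symm
        · rw [if_neg h2, if_neg h1]
          have ha := hadjq (2*k - (j+1)) (by omega)
          rw [show 2*k - (j+1) + 1 = 2*k - j from by omega] at ha
          exact ha.symm
    · intro j hj
      show (if j ≤ k then r j else q (2*k - j)) ∈ R.sphere (n + j)
      rw [if_pos hj]
      exact hsphr j hj
    · intro j hj1 hj2
      show (if j ≤ k then r j else q (2*k - j)) ∈ R.sphere (n + (2*k - j))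
      rcases le_or_gt j k with h | h
      · have hjk : j = k := by omega
        subst hjk
        rw [if_pos le_rfl]
        exact R.sphere_congr (by omega) (hsphr j le_rfl)
      · rw [if_neg (by omega : ¬ j ≤ k)]
        exact hsphq (2*k - j) (by omega)
    · show (if k ≤ k then r k else q (2*k - k)) = w
      rw [if_pos le_rfl]
      exact hendr k le_rfl⟩
  left_inv p := by
    apply Subtype.ext; funext j
    show (if j ≤ k then p.1 (min j k) else p.1 (2*k - min (2*k - j) k)) = p.1 j
    rcases le_or_gt j k with hj | hj
    · rw [if_pos hj, show min j k = j from by omega]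
    · rw [if_neg (by omega : ¬ j ≤ k)]
      rcases le_or_gt j (2*k) with hj' | hj'
      · rw [show 2*k - min (2*k - j) k = j from by omega]
      · rw [show 2*k - min (2*k - j) k = 2*k from by omega,
          p.2.1.2.1 (2*k) le_rfl, p.2.1.2.1 j (by omega)]
  right_inv rq := by
    obtain ⟨r, q⟩ := rq
    refine Prod.ext ?_ ?_ <;> apply Subtype.ext <;> funext j
    · show (if min j k ≤ k then r.1 (min j k) else q.1 (2*k - min j k)) = r.1 j
      rw [if_pos (by omega : min j k ≤ k)]
      rcases le_or_gt j k with hj | hj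
      · rw [show min j k = j from by omega]
      · rw [show min j k = k from by omega, r.2.2.1 k le_rfl, r.2.2.1 j (by omega)]
    · show (if 2*k - min j k ≤ k then r.1 (2*k - min j k) else
        q.1 (2*k - (2*k - min j k))) = q.1 j
      by_cases hc : 2*k - min j k ≤ k
      · have hjk : k ≤ j := by omega
        rw [if_pos hc, show 2*k - min j k = k from by omega,
          r.2.2.1 k le_rfl, q.2.2.1 j hjk]
      · rw [if_neg hc, show 2*k - (2*k - min j k) = j from by omega]

lemma lamPlus_apply_s10 (n k : ℕ) (x z : ↥(R.sphere n)) :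
    R.lamPlus n k x z = Nat.card {p : ℕ → V // R.IsForwardPath n k x.1 z.1 p} := by
  rw [lamPlus, Matrix.mul_apply]
  have key : Nat.card {p : ℕ → V // R.IsForwardPath n k x.1 z.1 p} =
      ∑ w : ↥(R.sphere (n + k)), Nat.card
        {p : ℕ → V // R.IsForwardPath n k x.1 z.1 p ∧ p k = w.1} := by
    apply auxCardFiberSum
    · intro p hp
      exact hp.2.2.2.1 k le_rfl
    · intro w
      exact auxFiniteAnd (R.fpFinite n k x.1 z.1)
  rw [key]
  apply Finset.sum_congr rfl
  intro w _
  rw [Matrix.transpose_apply, R.chainProd_apply_s10 n k w x, R.chainProd_apply_s10 n k w z,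
    Nat.card_congr (R.fpFiberEquiv n k x.1 z.1 w.1), Nat.card_prod]
  rfl

end RootedGraph

namespace RootedGraph

variable {V : Type*} (R : RootedGraph V)

lemma tailedF_eq (n k : ℕ) (x y : ↥(R.sphere n)) :
    R.tailedFCount n k x.1 y.1 =
      ∑ z : ↥(R.sphere n), R.lamPlus n k x z * R.Vsub n z y := by
  have ew : ∀ w : V,
      (fun p : ℕ → V => (R.IsForwardPath n k x.1 (p (2*k)) p ∧ R.G.Adj (p (2*k)) y.1)
        ∧ p (2*k) = w) = fun p => R.IsForwardPath n k x.1 w p ∧ R.G.Adj w y.1 := by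
    intro w
    funext p
    apply propext
    constructor
    · rintro ⟨⟨h1, h2⟩, h3⟩
      rw [h3] at h1 h2
      exact ⟨h1, h2⟩
    · rintro ⟨h1, h2⟩
      have h3 : p (2*k) = w := h1.2.1 (2*k) le_rfl
      rw [h3]
      exact ⟨⟨h1, h2⟩, rfl⟩
  rw [tailedFCount]
  rw [auxCardFiberSum (S := R.sphere n)
    (fun p : ℕ → V => R.IsForwardPath n k x.1 (p (2*k)) p ∧ R.G.Adj (p (2*k)) y.1)
    (fun p => p (2*k))
    (fun p hp => R.sphere_congr (by omega) (hp.1.2.2.2.2 (2*k) (by omega) le_rfl))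
    (fun w => by
      rw [ew w.1]
      exact auxFiniteAnd (R.fpFinite n k x.1 w.1))]
  apply Finset.sum_congr rfl
  intro w _
  rw [ew w.1, auxCardAndRight (R.IsForwardPath n k x.1 w.1) (R.G.Adj w.1 y.1),
    ← R.lamPlus_apply_s10 n k x w]
  simp only [Vsub]
  by_cases hA : R.G.Adj w.1 y.1
  · rw [if_pos hA, if_pos hA, mul_one]
  · rw [if_neg hA, if_neg hA, mul_zero]

lemma headedF_eq (n k : ℕ) (x y : ↥(R.sphere n)) :
    R.headedFCount n k x.1 y.1 =
      ∑ z : ↥(R.sphere n), R.Vsub n x z * R.lamPlus n k z y := by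
  have ew : ∀ w : V,
      (fun p : ℕ → V => (R.G.Adj x.1 (p 0) ∧ R.IsForwardPath n k (p 0) y.1 p)
        ∧ p 0 = w) = fun p => R.G.Adj x.1 w ∧ R.IsForwardPath n k w y.1 p := by
    intro w
    funext p
    apply propext
    constructor
    · rintro ⟨⟨h1, h2⟩, h3⟩
      rw [h3] at h1 h2
      exact ⟨h1, h2⟩
    · rintro ⟨h1, h2⟩
      have h3 : p 0 = w := h2.1
      rw [h3]
      exact ⟨⟨h1, h2⟩, rfl⟩
  rw [headedFCount]
  rw [auxCardFiberSum (S := R.sphere n)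
    (fun p : ℕ → V => R.G.Adj x.1 (p 0) ∧ R.IsForwardPath n k (p 0) y.1 p)
    (fun p => p 0)
    (fun p hp => hp.2.2.2.2.1 0 (Nat.zero_le k))
    (fun w => by
      rw [ew w.1]
      haveI := R.fpFinite n k w.1 y.1
      exact Finite.of_injective
        (fun p => (⟨p.1, p.2.2⟩ : {p : ℕ → V // R.IsForwardPath n k w.1 y.1 p}))
        (by
          intro a b hab
          simp only [Subtype.mk.injEq] at hab
          exact Subtype.ext hab))]
  apply Finset.sum_congr rfl
  intro w _
  rw [ew w.1, auxCardAndLeft (R.IsForwardPath n k w.1 y.1) (R.G.Adj x.1 w.1),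
    ← R.lamPlus_apply_s10 n k w y]
  simp only [Vsub]
  by_cases hA : R.G.Adj x.1 w.1
  · rw [if_pos hA, if_pos hA, one_mul]
  · rw [if_neg hA, if_neg hA, zero_mul]

lemma lamPlus_comm_Vsub (hPC : R.PathCommuting) (n k : ℕ) :
    R.lamPlus n k * R.Vsub n = R.Vsub n * R.lamPlus n k := by
  ext x y
  rw [Matrix.mul_apply, Matrix.mul_apply, ← R.tailedF_eq n k x y,
    ← R.headedF_eq n k x y]
  exact (hPC n x.1 x.2 y.1 y.2 k 0).2.1

end RootedGraph

namespace RootedGraph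

variable {V : Type*} (R : RootedGraph V)

lemma bpFinite (n l : ℕ) (x z : V) :
    Finite {p : ℕ → V // R.IsBackwardPath n l x z p} := by
  apply Finite.of_injective (β := (((j : Fin (l+1)) → ↥(R.sphere (n - j.1))) ×
      ((j : Fin (l+1)) → ↥(R.sphere (n - j.1)))))
    (fun p => (fun j => ⟨p.1 j, p.2.2.2.2.2.1 j (Nat.lt_succ_iff.mp j.2)⟩,
      fun j => ⟨p.1 (2*l - j),
        R.sphere_congr (by omega)
          (p.2.2.2.2.2.2 (2*l - j) (by omega) (by omega))⟩))
  intro p q h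
  have h1 := congrArg Prod.fst h
  have h2 := congrArg Prod.snd h
  apply Subtype.ext; funext j
  rcases le_or_gt j l with hj | hj
  · have := congrFun h1 ⟨j, by omega⟩
    exact congrArg Subtype.val this
  · rcases le_or_gt j (2*l) with hj' | hj'
    · have := congrArg Subtype.val (congrFun h2 ⟨2*l - j, by omega⟩)
      dsimp only at this
      have e : 2*l - (2*l - j) = j := by omega
      rw [e] at this
      exact this
    · rw [p.2.2.2.1 j (by omega), q.2.2.2.1 j (by omega)]

/-- Splitting a backward path through its midpoint `w`. -/
def bpFiberEquiv (m l : ℕ) (x z w : V) :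
    {p : ℕ → V // R.IsBackwardPath (m+l) l x z p ∧ p l = w} ≃
      {r : ℕ → V // R.IsUpPath m l w x r} × {s : ℕ → V // R.IsUpPath m l w z s} where
  toFun p := (⟨fun j => p.1 (l - j), by
      obtain ⟨⟨hln, h0, hend, hadj, hdown, hup⟩, hpl⟩ := p.2
      refine ⟨?_, ?_, ?_, ?_⟩
      · show p.1 (l - 0) = w
        rw [show l - 0 = l from by omega]; exact hpl
      · intro j hj
        show p.1 (l - j) = x
        rw [show l - j = 0 from by omega]; exact h0
      · intro j hj
        show R.G.Adj (p.1 (l - j)) (p.1 (l - (j+1)))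
        have ha := hadj (l - (j+1)) (by omega)
        rw [show l - (j+1) + 1 = l - j from by omega] at ha
        exact ha.symm
      · intro j hj
        show p.1 (l - j) ∈ R.sphere (m + j)
        exact R.sphere_congr (by omega) (hdown (l - j) (by omega))⟩,
    ⟨fun j => p.1 (min (l + j) (2*l)), by
      obtain ⟨⟨hln, h0, hend, hadj, hdown, hup⟩, hpl⟩ := p.2
      refine ⟨?_, ?_, ?_, ?_⟩
      · show p.1 (min (l + 0) (2*l)) = w
        rw [show min (l + 0) (2*l) = l from by omega]; exact hpl
      · intro j hj
        show p.1 (min (l + j) (2*l)) = z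
        rw [show min (l + j) (2*l) = 2*l from by omega]; exact hend (2*l) le_rfl
      · intro j hj
        show R.G.Adj (p.1 (min (l + j) (2*l))) (p.1 (min (l + (j+1)) (2*l)))
        rw [show min (l + j) (2*l) = l + j from by omega,
          show min (l + (j+1)) (2*l) = (l + j) + 1 from by omega]
        exact hadj (l + j) (by omega)
      · intro j hj
        show p.1 (min (l + j) (2*l)) ∈ R.sphere (m + j)
        exact R.sphere_congr (by omega)
          (hup (min (l + j) (2*l)) (by omega) (by omega))⟩)
  invFun rs := ⟨fun j => if j ≤ l then rs.1.1 (l - j) else rs.2.1 (j - l), by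
    obtain ⟨⟨r, h0r, hendr, hadjr, hsphr⟩, ⟨s, h0s, hends, hadjs, hsphs⟩⟩ := rs
    refine ⟨⟨by omega, ?_, ?_, ?_, ?_, ?_⟩, ?_⟩
    · show (if 0 ≤ l then r (l - 0) else s (0 - l)) = x
      rw [if_pos (Nat.zero_le l), show l - 0 = l from by omega]
      exact hendr l le_rfl
    · intro j hj
      show (if j ≤ l then r (l - j) else s (j - l)) = z
      rcases le_or_gt j l with h | h
      · have hl0 : l = 0 := by omega
        have hj0 : j = 0 := by omega
        subst hl0; subst hj0
        rw [if_pos le_rfl, show 0 - 0 = 0 from rfl, h0r, ← h0s]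
        exact hends 0 le_rfl
      · rw [if_neg (by omega : ¬ j ≤ l)]
        exact hends (j - l) (by omega)
    · intro j hj
      show R.G.Adj (if j ≤ l then r (l - j) else s (j - l))
        (if j + 1 ≤ l then r (l - (j+1)) else s (j + 1 - l))
      by_cases h1 : j + 1 ≤ l
      · rw [if_pos (by omega : j ≤ l), if_pos h1]
        have ha := hadjr (l - (j+1)) (by omega)
        rw [show l - (j+1) + 1 = l - j from by omega] at ha
        exact ha.symm
      · by_cases h2 : j ≤ l
        · have hjl : j = l := by omega
          subst hjl
          rw [if_pos le_rfl, if_neg h1, show j - j = 0 from by omega,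
            show j + 1 - j = 1 from by omega, h0r]
          have ha := hadjs 0 (by omega)
          rw [h0s] at ha
          exact ha
        · rw [if_neg h2, if_neg h1, show j + 1 - l = (j - l) + 1 from by omega]
          exact hadjs (j - l) (by omega)
    · intro j hj
      show (if j ≤ l then r (l - j) else s (j - l)) ∈ R.sphere ((m + l) - j)
      rw [if_pos hj]
      exact R.sphere_congr (by omega) (hsphr (l - j) (by omega))
    · intro j hj1 hj2
      show (if j ≤ l then r (l - j) else s (j - l)) ∈ R.sphere ((m + l) - (2*l - j))
      rcases le_or_gt j l with h | h
      · rw [if_pos h]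
        exact R.sphere_congr (by omega) (hsphr (l - j) (by omega))
      · rw [if_neg (by omega : ¬ j ≤ l)]
        exact R.sphere_congr (by omega) (hsphs (j - l) (by omega))
    · show (if l ≤ l then r (l - l) else s (l - l)) = w
      rw [if_pos le_rfl, show l - l = 0 from by omega]
      exact h0r⟩
  left_inv p := by
    apply Subtype.ext; funext j
    show (if j ≤ l then p.1 (l - (l - j)) else p.1 (min (l + (j - l)) (2*l))) = p.1 j
    rcases le_or_gt j l with hj | hj
    · rw [if_pos hj, show l - (l - j) = j from by omega]
    · rw [if_neg (by omega : ¬ j ≤ l)]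
      rcases le_or_gt j (2*l) with hj' | hj'
      · rw [show min (l + (j - l)) (2*l) = j from by omega]
      · rw [show min (l + (j - l)) (2*l) = 2*l from by omega,
          p.2.1.2.2.1 (2*l) le_rfl, p.2.1.2.2.1 j (by omega)]
  right_inv rs := by
    obtain ⟨r, s⟩ := rs
    refine Prod.ext ?_ ?_ <;> apply Subtype.ext <;> funext j
    · show (if l - j ≤ l then r.1 (l - (l - j)) else s.1 ((l - j) - l)) = r.1 j
      rw [if_pos (by omega : l - j ≤ l)]
      rcases le_or_gt j l with hj | hj
      · rw [show l - (l - j) = j from by omega]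
      · rw [show l - (l - j) = l from by omega, r.2.2.1 l le_rfl,
          r.2.2.1 j (by omega)]
    · show (if min (l + j) (2*l) ≤ l then r.1 (l - min (l + j) (2*l))
        else s.1 (min (l + j) (2*l) - l)) = s.1 j
      by_cases hc : min (l + j) (2*l) ≤ l
      · rw [if_pos hc, show l - min (l + j) (2*l) = 0 from by omega, r.2.1]
        have hjl : j = 0 ∨ l = 0 := by omega
        rcases hjl with hj0 | hl0
        · subst hj0
          exact s.2.1.symm
        · have hz := s.2.2.1 j (by omega)
          have h0' := s.2.2.1 0 (by omega)
          rw [hz, ← h0', s.2.1]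
      · rw [if_neg hc, show min (l + j) (2*l) - l = min j l from by omega]
        rcases le_or_gt j l with hj | hj
        · rw [show min j l = j from by omega]
        · rw [show min j l = l from by omega, s.2.2.1 l le_rfl,
            s.2.2.1 j (by omega)]

lemma lamMinus_apply (m l : ℕ) (x z : ↥(R.sphere (m + l))) :
    R.lamMinus m l x z =
      Nat.card {p : ℕ → V // R.IsBackwardPath (m+l) l x.1 z.1 p} := by
  rw [lamMinus, Matrix.mul_apply]
  have key : Nat.card {p : ℕ → V // R.IsBackwardPath (m+l) l x.1 z.1 p} =
      ∑ w : ↥(R.sphere m), Nat.card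
        {p : ℕ → V // R.IsBackwardPath (m+l) l x.1 z.1 p ∧ p l = w.1} := by
    apply auxCardFiberSum
    · intro p hp
      exact R.sphere_congr (by omega) (hp.2.2.2.2.1 l le_rfl)
    · intro w
      exact auxFiniteAnd (R.bpFinite (m+l) l x.1 z.1)
  rw [key]
  apply Finset.sum_congr rfl
  intro w _
  rw [Matrix.transpose_apply, R.chainProd_apply_s10 m l x w, R.chainProd_apply_s10 m l z w,
    Nat.card_congr (R.bpFiberEquiv m l x.1 z.1 w.1), Nat.card_prod]
  rfl

end RootedGraph

namespace RootedGraph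

variable {V : Type*} (R : RootedGraph V)

lemma tailedB_eq (m l : ℕ) (x y : ↥(R.sphere (m + l))) :
    R.tailedBCount (m+l) l x.1 y.1 =
      ∑ z : ↥(R.sphere (m + l)), R.lamMinus m l x z * R.Vsub (m+l) z y := by
  have ew : ∀ w : V,
      (fun p : ℕ → V => (R.IsBackwardPath (m+l) l x.1 (p (2*l)) p ∧
          R.G.Adj (p (2*l)) y.1) ∧ p (2*l) = w) =
        fun p => R.IsBackwardPath (m+l) l x.1 w p ∧ R.G.Adj w y.1 := by
    intro w
    funext p
    apply propext
    constructor
    · rintro ⟨⟨h1, h2⟩, h3⟩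
      rw [h3] at h1 h2
      exact ⟨h1, h2⟩
    · rintro ⟨h1, h2⟩
      have h3 : p (2*l) = w := h1.2.2.1 (2*l) le_rfl
      rw [h3]
      exact ⟨⟨h1, h2⟩, rfl⟩
  rw [tailedBCount]
  rw [auxCardFiberSum (S := R.sphere (m+l))
    (fun p : ℕ → V => R.IsBackwardPath (m+l) l x.1 (p (2*l)) p ∧
      R.G.Adj (p (2*l)) y.1)
    (fun p => p (2*l))
    (fun p hp => R.sphere_congr (by omega) (hp.1.2.2.2.2.2 (2*l) (by omega) le_rfl))
    (fun w => by
      rw [ew w.1]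
      exact auxFiniteAnd (R.bpFinite (m+l) l x.1 w.1))]
  apply Finset.sum_congr rfl
  intro w _
  rw [ew w.1, auxCardAndRight (R.IsBackwardPath (m+l) l x.1 w.1) (R.G.Adj w.1 y.1),
    ← R.lamMinus_apply m l x w]
  simp only [Vsub]
  by_cases hA : R.G.Adj w.1 y.1
  · rw [if_pos hA, if_pos hA, mul_one]
  · rw [if_neg hA, if_neg hA, mul_zero]

lemma headedB_eq (m l : ℕ) (x y : ↥(R.sphere (m + l))) :
    R.headedBCount (m+l) l x.1 y.1 =
      ∑ z : ↥(R.sphere (m + l)), R.Vsub (m+l) x z * R.lamMinus m l z y := by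
  have ew : ∀ w : V,
      (fun p : ℕ → V => (R.G.Adj x.1 (p 0) ∧ R.IsBackwardPath (m+l) l (p 0) y.1 p)
        ∧ p 0 = w) = fun p => R.G.Adj x.1 w ∧ R.IsBackwardPath (m+l) l w y.1 p := by
    intro w
    funext p
    apply propext
    constructor
    · rintro ⟨⟨h1, h2⟩, h3⟩
      rw [h3] at h1 h2
      exact ⟨h1, h2⟩
    · rintro ⟨h1, h2⟩
      have h3 : p 0 = w := h2.2.1
      rw [h3]
      exact ⟨⟨h1, h2⟩, rfl⟩
  rw [headedBCount]
  rw [auxCardFiberSum (S := R.sphere (m+l))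
    (fun p : ℕ → V => R.G.Adj x.1 (p 0) ∧ R.IsBackwardPath (m+l) l (p 0) y.1 p)
    (fun p => p 0)
    (fun p hp => hp.2.2.2.2.2.1 0 (Nat.zero_le l))
    (fun w => by
      rw [ew w.1]
      haveI := R.bpFinite (m+l) l w.1 y.1
      exact Finite.of_injective
        (fun p => (⟨p.1, p.2.2⟩ :
          {p : ℕ → V // R.IsBackwardPath (m+l) l w.1 y.1 p}))
        (by
          intro a b hab
          simp only [Subtype.mk.injEq] at hab
          exact Subtype.ext hab))]
  apply Finset.sum_congr rfl
  intro w _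
  rw [ew w.1, auxCardAndLeft (R.IsBackwardPath (m+l) l w.1 y.1) (R.G.Adj x.1 w.1),
    ← R.lamMinus_apply m l w y]
  simp only [Vsub]
  by_cases hA : R.G.Adj x.1 w.1
  · rw [if_pos hA, if_pos hA, one_mul]
  · rw [if_neg hA, if_neg hA, zero_mul]

lemma lamMinus_comm_Vsub (hPC : R.PathCommuting) (m l : ℕ) :
    R.lamMinus m l * R.Vsub (m+l) = R.Vsub (m+l) * R.lamMinus m l := by
  ext x y
  rw [Matrix.mul_apply, Matrix.mul_apply, ← R.tailedB_eq m l x y,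
    ← R.headedB_eq m l x y]
  exact (hPC (m+l) x.1 x.2 y.1 y.2 l 0).2.2

end RootedGraph


/-- on a path commuting graph, Λ_{n,+j} commutes with
E_n^T ⋯ V_{n+j} ⋯ E_n and Λ_{n,-j} commutes with E_{n-1} ⋯ V_{n-j} ⋯ E_{n-1}^T
(here the backward case is parametrized by n = m + j with m = n - j). -/
theorem stmt10 {V : Type*} (R : RootedGraph V) (hPC : R.PathCommuting) :
    (∀ n j : ℕ,
      Commute (R.lamPlus n j) ((R.chainProd n j)ᵀ * R.Vsub (n + j) * R.chainProd n j)) ∧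
    (∀ m j : ℕ, 1 ≤ m + j →
      Commute (R.lamMinus m j) (R.chainProd m j * R.Vsub m * (R.chainProd m j)ᵀ)) := by
  constructor
  · intro n j
    have h := R.lamMinus_comm_Vsub hPC n j
    rw [RootedGraph.lamMinus] at h
    show R.lamPlus n j * _ = _ * R.lamPlus n j
    rw [RootedGraph.lamPlus]
    set C := R.chainProd n j with hC
    set W := R.Vsub (n + j) with hW
    simp only [Matrix.mul_assoc]
    congr 1
    calc C * (Cᵀ * (W * C)) = ((C * Cᵀ) * W) * C := by
          rw [Matrix.mul_assoc, Matrix.mul_assoc]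
      _ = (W * (C * Cᵀ)) * C := by rw [h]
      _ = W * (C * (Cᵀ * C)) := by rw [Matrix.mul_assoc, Matrix.mul_assoc]
  · intro m j _
    have h := R.lamPlus_comm_Vsub hPC m j
    rw [RootedGraph.lamPlus] at h
    show R.lamMinus m j * _ = _ * R.lamMinus m j
    rw [RootedGraph.lamMinus]
    set C := R.chainProd m j with hC
    set W := R.Vsub m with hW
    simp only [Matrix.mul_assoc]
    congr 1
    calc Cᵀ * (C * (W * Cᵀ)) = ((Cᵀ * C) * W) * Cᵀ := by
          rw [Matrix.mul_assoc, Matrix.mul_assoc]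
      _ = (W * (Cᵀ * C)) * Cᵀ := by rw [h]
      _ = W * (Cᵀ * (C * Cᵀ)) := by rw [Matrix.mul_assoc, Matrix.mul_assoc]
end

section
/- Let G be an antitree with sphere sizes (s_n), and let n ≥ 1. Every function φ ∈ ℓ²(G) supported on S_n with Σ_{x ∈ S_n} φ(x) = 0 is an eigenfunction of the graph Laplacian Δ with eigenvalue s_{n-1} + s_{n+1}. -/
open SimpleGraph Matrix

attribute [local instance] Classical.propDecidable

/-- functions supported on a sphere of an antitree with zero mean are
eigenfunctions of the Laplacian with eigenvalue s_{n-1} + s_{n+1}. -/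
theorem stmt12 {V : Type*} (R : RootedGraph V) (hAT : R.IsAntitree) (s : ℕ → ℕ)
    (hs : ∀ n : ℕ, (R.sphere n).ncard = s n)
    (n : ℕ) (hn : 1 ≤ n) (φ : V → ℝ)
    (hsupp : ∀ v : V, v ∉ R.sphere n → φ v = 0)
    (hsum : (∑ᶠ v ∈ R.sphere n, φ v) = 0) :
    ∀ x : V, R.lap φ x = ((s (n - 1) : ℝ) + (s (n + 1) : ℝ)) * φ x := by
  classical
  intro x
  have hNfin : (R.G.neighborSet x).Finite := R.locFin x
  have hadj : ∀ y : V, R.G.Adj x y ↔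
      (R.G.dist R.o y = R.G.dist R.o x + 1 ∨ R.G.dist R.o y + 1 = R.G.dist R.o x) := by
    intro y
    rw [hAT x y]
    omega
  rw [RootedGraph.lap, finsum_mem_eq_finite_toFinset_sum _ hNfin, Finset.sum_sub_distrib]
  by_cases hx : x ∈ R.sphere n
  · have hxn : R.G.dist R.o x = n := hx
    have h0 : ∀ y ∈ hNfin.toFinset, φ y = 0 := by
      intro y hy
      apply hsupp
      rw [Set.Finite.mem_toFinset, SimpleGraph.mem_neighborSet, hadj y, hxn] at hy
      intro hyn
      have hyn' : R.G.dist R.o y = n := hyn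
      omega
    rw [Finset.sum_eq_zero h0, Finset.sum_const, sub_zero, nsmul_eq_mul]
    congr 1
    have hset : R.G.neighborSet x = R.sphere (n-1) ∪ R.sphere (n+1) := by
      ext y
      simp only [SimpleGraph.mem_neighborSet, hadj y, hxn, Set.mem_union,
        RootedGraph.sphere, Set.mem_setOf_eq]
      omega
    have hdisj : Disjoint (R.sphere (n-1)) (R.sphere (n+1)) := by
      rw [Set.disjoint_left]
      intro a ha ha'
      have h1 : R.G.dist R.o a = n - 1 := ha
      have h2 : R.G.dist R.o a = n + 1 := ha'
      omega
    have hcard : hNfin.toFinset.card = (R.sphere (n-1)).ncard + (R.sphere (n+1)).ncard := by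
      rw [show hNfin.toFinset.card = (R.G.neighborSet x).ncard from
          (Set.ncard_eq_toFinset_card _ hNfin).symm, hset,
        Set.ncard_union_eq hdisj (R.sphereFin (n-1)) (R.sphereFin (n+1))]
    rw [hcard, hs (n-1), hs (n+1)]
    push_cast
    ring
  · have hφx : φ x = 0 := hsupp x hx
    have hsum0 : ∑ y ∈ hNfin.toFinset, φ y = 0 := by
      set m := R.G.dist R.o x with hm
      by_cases hc : n = m + 1 ∨ m = n + 1
      · have hsub : (R.sphereFin n).toFinset ⊆ hNfin.toFinset := by
          intro y hy
          rw [Set.Finite.mem_toFinset] at hy ⊢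
          have hyn : R.G.dist R.o y = n := hy
          rw [SimpleGraph.mem_neighborSet, hadj y, hyn]
          omega
        rw [← Finset.sum_subset hsub (by
          intro y _ hy'
          apply hsupp
          rw [Set.Finite.mem_toFinset] at hy'
          exact hy')]
        rw [← finsum_mem_eq_finite_toFinset_sum _ (R.sphereFin n)]
        exact hsum
      · apply Finset.sum_eq_zero
        intro y hy
        apply hsupp
        rw [Set.Finite.mem_toFinset, SimpleGraph.mem_neighborSet, hadj y] at hy
        intro hyn
        have hyn' : R.G.dist R.o y = n := hyn
        omega
    rw [hsum0, hφx]
    simp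
end

section
/- Let (s_n) be a bounded sequence of positive integers with s_0 = 1, and define a_n = √(s_n s_{n+1}) and b_n = s_{n-1} + s_{n+1} (with s_{-1} = 0). Then the sequences (a_n) and (b_n) are both eventually periodic if and only if (s_n) is eventually periodic. -/
/-- A sequence is eventually periodic if it is periodic with some period `q ≥ 1`
from some index on. -/
def EventuallyPeriodic (v : ℕ → ℝ) : Prop :=
  ∃ N q : ℕ, 1 ≤ q ∧ ∀ n : ℕ, N ≤ n → v (n + q) = v n

/-- for a bounded sequence of positive integers (s_n) with s_0 = 1,
the Jacobi parameters a_n = √(s_n s_{n+1}) and b_n = s_{n-1} + s_{n+1} (s_{-1} = 0)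
are both eventually periodic iff (s_n) is eventually periodic. -/
theorem stmt13 (s : ℕ → ℕ) (hpos : ∀ n, 1 ≤ s n) (h0 : s 0 = 1)
    (hbdd : ∃ C : ℕ, ∀ n, s n ≤ C)
    (a b : ℕ → ℝ)
    (ha : ∀ n : ℕ, a n = Real.sqrt ((s n : ℝ) * (s (n + 1) : ℝ)))
    (hb0 : b 0 = (s 1 : ℝ))
    (hb : ∀ n : ℕ, b (n + 1) = (s n : ℝ) + (s (n + 2) : ℝ)) :
    (EventuallyPeriodic a ∧ EventuallyPeriodic b) ↔
      EventuallyPeriodic (fun n => (s n : ℝ)) := by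
  constructor
  · rintro ⟨⟨N, q, hq, hap⟩, -⟩
    -- From periodicity of a we get product relations
    have key : ∀ j, N ≤ j → s j * s (j + 1) = s (j + q) * s (j + q + 1) := by
      intro j hj
      have h := hap j hj
      rw [ha, ha] at h
      have h1 : ((s (j + q) : ℝ) * (s (j + q + 1) : ℝ)) = (s j : ℝ) * (s (j + 1) : ℝ) := by
        have hnn1 : (0 : ℝ) ≤ (s (j + q) : ℝ) * (s (j + q + 1) : ℝ) := by positivity
        have hnn2 : (0 : ℝ) ≤ (s j : ℝ) * (s (j + 1) : ℝ) := by positivity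
        exact (Real.sqrt_inj hnn1 hnn2).mp h
      exact_mod_cast h1.symm
    -- Iterated relation with period t*q
    have key' : ∀ t j, N ≤ j → s j * s (j + 1) = s (j + t * q) * s (j + t * q + 1) := by
      intro t
      induction t with
      | zero => intro j hj; simp
      | succ t ih =>
        intro j hj
        have h1 := ih j hj
        have h2 := key (j + t * q) (le_trans hj (Nat.le_add_right _ _))
        have : j + (t + 1) * q = j + t * q + q := by ring
        rw [this]
        omega
    -- Pigeonhole: two equal values along the progression N, N+q, ...
    obtain ⟨C, hC⟩ := hbdd
    have hmaps : ∀ i ∈ Finset.range (C + 1), s (N + i * q) ∈ Finset.Icc 1 C := by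
      intro i _
      simp only [Finset.mem_Icc]
      exact ⟨hpos _, hC _⟩
    have hcard : (Finset.Icc 1 C).card < (Finset.range (C + 1)).card := by
      simp [Nat.card_Icc]
    obtain ⟨i, hi, j, hj, hij, heq⟩ :=
      Finset.exists_ne_map_eq_of_card_lt_of_maps_to hcard hmaps
    -- WLOG i < j
    rcases lt_or_gt_of_ne hij with hlt | hlt
    case _ =>
      clear hi hj hij
      refine ⟨N + i * q, (j - i) * q, ?_, ?_⟩
      · have : 1 ≤ j - i := by omega
        exact Nat.one_le_iff_ne_zero.mpr (by positivity)
      · -- propagate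
        have base : s (N + i * q + (j - i) * q) = s (N + i * q) := by
          have : N + i * q + (j - i) * q = N + j * q := by
            have : i * q + (j - i) * q = j * q := by
              rw [← Nat.add_mul]; congr 1; omega
            omega
          rw [this, heq]
        have prop : ∀ m, s (N + i * q + m + (j - i) * q) = s (N + i * q + m) := by
          intro m
          induction m with
          | zero => simpa using base
          | succ m ih =>
            have hk := key' (j - i) (N + i * q + m) (by omega)
            have hpos1 := hpos (N + i * q + m)
            have e1 : N + i * q + m + (j - i) * q + 1 = N + i * q + (m + 1) + (j - i) * q := by
              omega
            have e2 : N + i * q + m + 1 = N + i * q + (m + 1) := by omega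
            -- from hk and ih, cancel
            rw [ih] at hk
            have := Nat.eq_of_mul_eq_mul_left (by omega : 0 < s (N + i * q + m)) hk
            rw [e1, e2] at this
            exact this.symm
        intro n hn
        have hn' : n = N + i * q + (n - (N + i * q)) := by omega
        calc (fun n => (s n : ℝ)) (n + (j - i) * q)
            = (s (N + i * q + (n - (N + i * q)) + (j - i) * q) : ℝ) := by rw [← hn']
          _ = (s n : ℝ) := by rw [prop, ← hn']
    case _ =>
      clear hi hj hij
      refine ⟨N + j * q, (i - j) * q, ?_, ?_⟩
      · have : 1 ≤ i - j := by omega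
        exact Nat.one_le_iff_ne_zero.mpr (by positivity)
      · have base : s (N + j * q + (i - j) * q) = s (N + j * q) := by
          have : N + j * q + (i - j) * q = N + i * q := by
            have : j * q + (i - j) * q = i * q := by
              rw [← Nat.add_mul]; congr 1; omega
            omega
          rw [this, heq]
        have prop : ∀ m, s (N + j * q + m + (i - j) * q) = s (N + j * q + m) := by
          intro m
          induction m with
          | zero => simpa using base
          | succ m ih =>
            have hk := key' (i - j) (N + j * q + m) (by omega)
            have e1 : N + j * q + m + (i - j) * q + 1 = N + j * q + (m + 1) + (i - j) * q := by
              omega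
            have e2 : N + j * q + m + 1 = N + j * q + (m + 1) := by omega
            rw [ih] at hk
            have := Nat.eq_of_mul_eq_mul_left (by have := hpos (N + j * q + m); omega) hk
            rw [e1, e2] at this
            exact this.symm
        intro n hn
        have hn' : n = N + j * q + (n - (N + j * q)) := by omega
        calc (fun n => (s n : ℝ)) (n + (i - j) * q)
            = (s (N + j * q + (n - (N + j * q)) + (i - j) * q) : ℝ) := by rw [← hn']
          _ = (s n : ℝ) := by rw [prop, ← hn']
  · rintro ⟨N, q, hq, hs⟩
    have hsn : ∀ n, N ≤ n → s (n + q) = s n := by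
      intro n hn
      have h : ((s (n + q) : ℝ)) = (s n : ℝ) := hs n hn
      exact_mod_cast h
    constructor
    · refine ⟨N, q, hq, fun n hn => ?_⟩
      rw [ha, ha]
      have e : n + q + 1 = n + 1 + q := by omega
      rw [hsn n hn, e, hsn (n + 1) (by omega)]
    · refine ⟨N + 1, q, hq, fun n hn => ?_⟩
      rcases n with _ | m
      · omega
      · have e : m + 1 + q = (m + q) + 1 := by omega
        rw [e, hb, hb]
        have e2 : m + q + 2 = m + 2 + q := by omega
        rw [hsn m (by omega), e2, hsn (m + 2) (by omega)]
end

section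
/- Let G be a family preserving rooted graph, x, y ∈ S_n, and let Z = Z^{k,ℓ}_{x,y} be the set of z ∈ S_n such that there is a k-forward path from x to z and an ℓ-backward path from y to z. If z₁, z₂ ∈ Z, then there exist both a k-forward path and an ℓ-backward path from z₁ to z₂. Conversely, if z₁ ∈ Z and z₂ ∈ S_n admits both a k-forward path and an ℓ-backward path to z₁, then z₂ ∈ Z. -/
open SimpleGraph Matrix

attribute [local instance] Classical.propDecidable

namespace RootedGraph

variable {V : Type*} (R : RootedGraph V)

lemma dist_map_le (τ : R.G ≃g R.G) (u v : V) :
    R.G.dist (τ u) (τ v) ≤ R.G.dist u v := by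
  obtain ⟨p, hp⟩ := (R.connected.preconnected u v).exists_walk_length_eq_dist
  calc R.G.dist (τ u) (τ v) ≤ (p.map τ.toHom).length := SimpleGraph.dist_le _
    _ = R.G.dist u v := by rw [SimpleGraph.Walk.length_map, hp]

lemma dist_map (τ : R.G ≃g R.G) (u v : V) :
    R.G.dist (τ u) (τ v) = R.G.dist u v := by
  refine le_antisymm (R.dist_map_le τ u v) ?_
  have := R.dist_map_le τ.symm (τ u) (τ v)
  simpa using this

lemma mem_sphere_map (τ : R.G ≃g R.G) (hτ : τ R.o = R.o) {m : ℕ} {v : V}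
    (hv : v ∈ R.sphere m) : τ v ∈ R.sphere m := by
  simp only [sphere, Set.mem_setOf_eq] at *
  rw [← hτ, R.dist_map]; exact hv

lemma sphere_cast {m₁ m₂ : ℕ} (h : m₁ = m₂) {v : V} (hv : v ∈ R.sphere m₁) :
    v ∈ R.sphere m₂ := h ▸ hv

lemma forward_rev {n k : ℕ} {u v : V} {p : ℕ → V} (hp : R.IsForwardPath n k u v p) :
    R.IsForwardPath n k v u (fun j => p (2*k - j)) := by
  obtain ⟨h0, hend, hadj, hup, hdown⟩ := hp
  refine ⟨by simpa using hend (2*k) le_rfl, ?_, ?_, ?_, ?_⟩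
  · intro j hj
    have h1 : 2*k - j = 0 := by omega
    simp only [h1, h0]
  · intro j hj
    have h1 : 2*k - j = (2*k - (j+1)) + 1 := by omega
    simp only [h1]
    exact (hadj _ (by omega)).symm
  · intro j hj
    exact R.sphere_cast (by omega) (hdown (2*k - j) (by omega) (by omega))
  · intro j hj hj2
    exact R.sphere_cast (by omega) (hup (2*k - j) (by omega))

lemma backward_rev {n l : ℕ} {u v : V} {p : ℕ → V} (hp : R.IsBackwardPath n l u v p) :
    R.IsBackwardPath n l v u (fun j => p (2*l - j)) := by
  obtain ⟨hln, h0, hend, hadj, hup, hdown⟩ := hp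
  refine ⟨hln, by simpa using hend (2*l) le_rfl, ?_, ?_, ?_, ?_⟩
  · intro j hj
    have h1 : 2*l - j = 0 := by omega
    simp only [h1, h0]
  · intro j hj
    have h1 : 2*l - j = (2*l - (j+1)) + 1 := by omega
    simp only [h1]
    exact (hadj _ (by omega)).symm
  · intro j hj
    exact R.sphere_cast (by omega) (hdown (2*l - j) (by omega) (by omega))
  · intro j hj hj2
    exact R.sphere_cast (by omega) (hup (2*l - j) (by omega))

lemma forward_glue {n k : ℕ} {x z₁ z₂ : V} {p : ℕ → V}
    (hp : R.IsForwardPath n k x z₂ p)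
    (τ : R.G ≃g R.G) (hτo : τ R.o = R.o) (hτx : τ x = z₁)
    (hfix : ∀ j, k ≤ j → ∀ w ∈ R.sphere (n + j), τ w = w) :
    R.IsForwardPath n k z₁ z₂ (fun j => if j ≤ k then τ (p j) else p j) := by
  obtain ⟨h0, hend, hadj, hup, hdown⟩ := hp
  have hmid : τ (p k) = p k := hfix k le_rfl (p k) (hup k le_rfl)
  refine ⟨by simp [h0, hτx], ?_, ?_, ?_, ?_⟩
  · intro j hj
    by_cases hjk : j ≤ k
    · have hk0 : k = 0 := by omega
      have hj0 : j = 0 := by omega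
      subst hk0; subst hj0
      simp only [if_pos le_rfl]
      have hpz : p 0 = z₂ := hend 0 (by omega)
      rw [hpz]
      exact hfix 0 le_rfl z₂ (by rw [← hpz]; exact hup 0 le_rfl)
    · simp only [if_neg hjk]; exact hend j hj
  · intro j hj
    by_cases h1 : j + 1 ≤ k
    · simp only [if_pos (by omega : j ≤ k), if_pos h1]
      exact τ.map_adj_iff.mpr (hadj j hj)
    · by_cases h2 : j ≤ k
      · have : j = k := by omega
        subst this
        simp only [if_pos le_rfl, if_neg h1, hmid]
        exact hadj j hj
      · simp only [if_neg h2, if_neg (by omega : ¬ j + 1 ≤ k)]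
        exact hadj j hj
  · intro j hj
    simp only [if_pos hj]
    exact R.mem_sphere_map τ hτo (hup j hj)
  · intro j hj hj2
    by_cases h2 : j ≤ k
    · simp only [if_pos h2]
      exact R.mem_sphere_map τ hτo (hdown j hj hj2)
    · simp only [if_neg h2]
      exact hdown j hj hj2

lemma backward_glue {n l : ℕ} {x z₁ z₂ : V} {p : ℕ → V}
    (hp : R.IsBackwardPath n l x z₂ p)
    (τ : R.G ≃g R.G) (hτo : τ R.o = R.o) (hτx : τ x = z₁)
    (hfix : ∀ j, l ≤ j → j ≤ n → ∀ w ∈ R.sphere (n - j), τ w = w) :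
    R.IsBackwardPath n l z₁ z₂ (fun j => if j ≤ l then τ (p j) else p j) := by
  obtain ⟨hln, h0, hend, hadj, hup, hdown⟩ := hp
  have hmid : τ (p l) = p l := hfix l le_rfl hln (p l) (hup l le_rfl)
  refine ⟨hln, by simp [h0, hτx], ?_, ?_, ?_, ?_⟩
  · intro j hj
    by_cases hjk : j ≤ l
    · have hk0 : l = 0 := by omega
      have hj0 : j = 0 := by omega
      subst hk0; subst hj0
      simp only [if_pos le_rfl]
      have hpz : p 0 = z₂ := hend 0 (by omega)
      rw [hpz]
      exact hfix 0 le_rfl hln z₂ (by rw [← hpz]; exact hup 0 le_rfl)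
    · simp only [if_neg hjk]; exact hend j hj
  · intro j hj
    by_cases h1 : j + 1 ≤ l
    · simp only [if_pos (by omega : j ≤ l), if_pos h1]
      exact τ.map_adj_iff.mpr (hadj j hj)
    · by_cases h2 : j ≤ l
      · have : j = l := by omega
        subst this
        simp only [if_pos le_rfl, if_neg h1, hmid]
        exact hadj j hj
      · simp only [if_neg h2, if_neg (by omega : ¬ j + 1 ≤ l)]
        exact hadj j hj
  · intro j hj
    simp only [if_pos hj]
    exact R.mem_sphere_map τ hτo (hup j hj)
  · intro j hj hj2
    by_cases h2 : j ≤ l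
    · simp only [if_pos h2]
      exact R.mem_sphere_map τ hτo (hdown j hj hj2)
    · simp only [if_neg h2]
      exact hdown j hj hj2

lemma forward_auto (hFP : R.FamilyPreserving) :
    ∀ (k n : ℕ) (u v : V) (p : ℕ → V), R.IsForwardPath n k u v p →
    ∃ τ : R.G ≃g R.G, τ R.o = R.o ∧ τ u = v ∧
      ∀ j, k ≤ j → ∀ w ∈ R.sphere (n + j), τ w = w := by
  intro k
  induction k with
  | zero =>
    intro n u v p hp
    obtain ⟨h0, hend, _, _, _⟩ := hp
    have huv : u = v := by rw [← h0]; exact hend 0 (by omega)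
    exact ⟨RelIso.refl R.G.Adj, rfl, huv, fun j _ w _ => rfl⟩
  | succ k ih =>
    intro n u v p hp
    obtain ⟨h0, hend, hadj, hup, hdown⟩ := hp
    set q : ℕ → V := fun j => if j ≤ 2*k then p (j+1) else p (2*k+1) with hqdef
    have hq : R.IsForwardPath (n+1) k (p 1) (p (2*k+1)) q := by
      refine ⟨by simp [hqdef], ?_, ?_, ?_, ?_⟩
      · intro j hj
        by_cases h : j ≤ 2*k
        · have : j = 2*k := by omega
          simp [hqdef, this]
        · simp [hqdef, h]
      · intro j hj
        simp only [hqdef, if_pos (by omega : j ≤ 2*k), if_pos (by omega : j + 1 ≤ 2*k)]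
        exact hadj (j+1) (by omega)
      · intro j hj
        simp only [hqdef, if_pos (by omega : j ≤ 2*k)]
        exact R.sphere_cast (by omega) (hup (j+1) (by omega))
      · intro j hj hj2
        simp only [hqdef, if_pos (by omega : j ≤ 2*k)]
        exact R.sphere_cast (by omega) (hdown (j+1) (by omega) (by omega))
    obtain ⟨τ₁, hτ₁o, hτ₁, hfix₁⟩ := ih (n+1) (p 1) (p (2*k+1)) q hq
    have hu : u ∈ R.sphere n := by
      have := hup 0 (by omega); rw [h0] at this; simpa using this
    have hv : v ∈ R.sphere n := by
      have := hdown (2*(k+1)) (by omega) (by omega)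
      rw [hend _ le_rfl] at this
      exact R.sphere_cast (by omega) this
    have hz : p (2*k+1) ∈ R.sphere (n+1) :=
      R.sphere_cast (by omega) (hdown (2*k+1) (by omega) (by omega))
    have hτu : τ₁ u ∈ R.sphere n := R.mem_sphere_map τ₁ hτ₁o hu
    have hadj1 : R.G.Adj (τ₁ u) (p (2*k+1)) := by
      have h1 : R.G.Adj (p 0) (p 1) := hadj 0 (by omega)
      rw [h0] at h1
      have h2 : R.G.Adj (τ₁ u) (τ₁ (p 1)) := τ₁.map_adj_iff.mpr h1
      rwa [hτ₁] at h2
    have hadj2 : R.G.Adj v (p (2*k+1)) := by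
      have h1 : R.G.Adj (p (2*k+1)) (p (2*k+2)) := hadj (2*k+1) (by omega)
      rw [hend (2*k+2) (by omega)] at h1
      exact h1.symm
    obtain ⟨τ₂, hτ₂o, hτ₂, hfix₂⟩ := hFP.1 n (τ₁ u) hτu v hv (p (2*k+1)) hz hadj1 hadj2
    refine ⟨τ₁.trans τ₂, ?_, ?_, ?_⟩
    · show τ₂ (τ₁ R.o) = R.o
      rw [hτ₁o, hτ₂o]
    · show τ₂ (τ₁ u) = v
      exact hτ₂
    · intro j hj w hw
      show τ₂ (τ₁ w) = w
      have h1 : τ₁ w = w :=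
        hfix₁ (j-1) (by omega) w (R.sphere_cast (by omega) hw)
      rw [h1]
      exact hfix₂ j (by omega) w hw

lemma backward_auto (hFP : R.FamilyPreserving) :
    ∀ (l n : ℕ) (u v : V) (p : ℕ → V), R.IsBackwardPath n l u v p →
    ∃ τ : R.G ≃g R.G, τ R.o = R.o ∧ τ u = v ∧
      ∀ j, l ≤ j → j ≤ n → ∀ w ∈ R.sphere (n - j), τ w = w := by
  intro l
  induction l with
  | zero =>
    intro n u v p hp
    obtain ⟨_, h0, hend, _, _, _⟩ := hp
    have huv : u = v := by rw [← h0]; exact hend 0 (by omega)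
    exact ⟨RelIso.refl R.G.Adj, rfl, huv, fun j _ _ w _ => rfl⟩
  | succ l ih =>
    intro n u v p hp
    obtain ⟨hln, h0, hend, hadj, hup, hdown⟩ := hp
    have hn1 : 1 ≤ n := by omega
    set q : ℕ → V := fun j => if j ≤ 2*l then p (j+1) else p (2*l+1) with hqdef
    have hq : R.IsBackwardPath (n-1) l (p 1) (p (2*l+1)) q := by
      refine ⟨by omega, by simp [hqdef], ?_, ?_, ?_, ?_⟩
      · intro j hj
        by_cases h : j ≤ 2*l
        · have : j = 2*l := by omega
          simp [hqdef, this]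
        · simp [hqdef, h]
      · intro j hj
        simp only [hqdef, if_pos (by omega : j ≤ 2*l), if_pos (by omega : j + 1 ≤ 2*l)]
        exact hadj (j+1) (by omega)
      · intro j hj
        simp only [hqdef, if_pos (by omega : j ≤ 2*l)]
        exact R.sphere_cast (by omega) (hup (j+1) (by omega))
      · intro j hj hj2
        simp only [hqdef, if_pos (by omega : j ≤ 2*l)]
        exact R.sphere_cast (by omega) (hdown (j+1) (by omega) (by omega))
    obtain ⟨τ₁, hτ₁o, hτ₁, hfix₁⟩ := ih (n-1) (p 1) (p (2*l+1)) q hq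
    have hu : u ∈ R.sphere n := by
      have := hup 0 (by omega); rw [h0] at this; simpa using this
    have hv : v ∈ R.sphere n := by
      have := hdown (2*(l+1)) (by omega) (by omega)
      rw [hend _ le_rfl] at this
      exact R.sphere_cast (by omega) this
    have hz : p (2*l+1) ∈ R.sphere (n-1) :=
      R.sphere_cast (by omega) (hdown (2*l+1) (by omega) (by omega))
    have hτu : τ₁ u ∈ R.sphere n := R.mem_sphere_map τ₁ hτ₁o hu
    have hadj1 : R.G.Adj (τ₁ u) (p (2*l+1)) := by
      have h1 : R.G.Adj (p 0) (p 1) := hadj 0 (by omega)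
      rw [h0] at h1
      have h2 : R.G.Adj (τ₁ u) (τ₁ (p 1)) := τ₁.map_adj_iff.mpr h1
      rwa [hτ₁] at h2
    have hadj2 : R.G.Adj v (p (2*l+1)) := by
      have h1 : R.G.Adj (p (2*l+1)) (p (2*l+2)) := hadj (2*l+1) (by omega)
      rw [hend (2*l+2) (by omega)] at h1
      exact h1.symm
    obtain ⟨τ₂, hτ₂o, hτ₂, hfix₂⟩ :=
      hFP.2.1 n hn1 (τ₁ u) hτu v hv (p (2*l+1)) hz hadj1 hadj2
    refine ⟨τ₁.trans τ₂, ?_, ?_, ?_⟩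
    · show τ₂ (τ₁ R.o) = R.o
      rw [hτ₁o, hτ₂o]
    · show τ₂ (τ₁ u) = v
      exact hτ₂
    · intro j hj hj2 w hw
      show τ₂ (τ₁ w) = w
      have h1 : τ₁ w = w :=
        hfix₁ (j-1) (by omega) (by omega) w (R.sphere_cast (by omega) hw)
      rw [h1]
      exact hfix₂ j (by omega) (by omega) w hw
end RootedGraph

/-- structure of the set Z^{k,ℓ}_{x,y} in a family preserving graph. -/
theorem stmt16 {V : Type*} (R : RootedGraph V) (hFP : R.FamilyPreserving)
    (n k l : ℕ) (x y : V) (hx : x ∈ R.sphere n) (hy : y ∈ R.sphere n) :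
    (∀ z₁ ∈ R.Zset n k l x y, ∀ z₂ ∈ R.Zset n k l x y,
      (∃ p, R.IsForwardPath n k z₁ z₂ p) ∧ (∃ q, R.IsBackwardPath n l z₁ z₂ q)) ∧
    (∀ z₁ ∈ R.Zset n k l x y, ∀ z₂ ∈ R.sphere n,
      (∃ p, R.IsForwardPath n k z₂ z₁ p) → (∃ q, R.IsBackwardPath n l z₂ z₁ q) →
      z₂ ∈ R.Zset n k l x y) := by
  have symm_o : ∀ τ : R.G ≃g R.G, τ R.o = R.o → τ.symm R.o = R.o := by
    intro τ hτ
    conv_lhs => rw [← hτ]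
    exact τ.symm_apply_apply R.o
  constructor
  · rintro z₁ ⟨hz₁s, ⟨p₁, hp₁⟩, ⟨q₁, hq₁⟩⟩ z₂ ⟨hz₂s, ⟨p₂, hp₂⟩, ⟨q₂, hq₂⟩⟩
    obtain ⟨τ, hτo, hτx, hτfix⟩ := R.forward_auto hFP k n x z₁ p₁ hp₁
    obtain ⟨σ, hσo, hσy, hσfix⟩ := R.backward_auto hFP l n y z₁ q₁ hq₁
    exact ⟨⟨_, R.forward_glue hp₂ τ hτo hτx hτfix⟩,
           ⟨_, R.backward_glue hq₂ σ hσo hσy hσfix⟩⟩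
  · rintro z₁ ⟨hz₁s, ⟨p₁, hp₁⟩, ⟨q₁, hq₁⟩⟩ z₂ hz₂s ⟨p, hp⟩ ⟨q, hq⟩
    obtain ⟨τ, hτo, hτx, hτfix⟩ := R.forward_auto hFP k n z₂ z₁ p hp
    obtain ⟨σ, hσo, hσy, hσfix⟩ := R.backward_auto hFP l n z₂ z₁ q hq
    refine ⟨hz₂s, ⟨?_, ?_⟩⟩
    · have hsymmfix : ∀ j, k ≤ j → ∀ w ∈ R.sphere (n+j), τ.symm w = w := by
        intro j hj w hw
        conv_lhs => rw [← hτfix j hj w hw]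
        exact τ.symm_apply_apply w
      have hsymmz : τ.symm z₁ = z₂ := by
        rw [← hτx]; exact τ.symm_apply_apply z₂
      have hglue := R.forward_glue (R.forward_rev hp₁) τ.symm (symm_o τ hτo) hsymmz hsymmfix
      exact ⟨_, R.forward_rev hglue⟩
    · have hsymmfix : ∀ j, l ≤ j → j ≤ n → ∀ w ∈ R.sphere (n-j), σ.symm w = w := by
        intro j hj hj2 w hw
        conv_lhs => rw [← hσfix j hj hj2 w hw]
        exact σ.symm_apply_apply w
      have hsymmz : σ.symm z₁ = z₂ := by
        rw [← hσy]; exact σ.symm_apply_apply z₂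
      have hglue := R.backward_glue (R.backward_rev hq₁) σ.symm (symm_o σ hσo) hsymmz hsymmfix
      exact ⟨_, R.backward_rev hglue⟩
end

section
/- Every spherically symmetric rooted tree is strongly path commuting: the path-count identities of path commuting hold, and any two vertices in the same sphere have equal degree. -/
open SimpleGraph Matrix

attribute [local instance] Classical.propDecidable

section StrPCAux

variable {V : Type*}

private lemma spc_concat_isPath {G : SimpleGraph V} {u v w : V} {p : G.Walk u v}
    (hp : p.IsPath) (h : G.Adj v w) (hw : w ∉ p.support) : (p.concat h).IsPath := by
  rw [← SimpleGraph.Walk.isPath_reverse_iff, SimpleGraph.Walk.reverse_concat]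
  exact hp.reverse.cons (by simpa [SimpleGraph.Walk.support_reverse] using hw)

private lemma spc_exists_path {G : SimpleGraph V} (hc : G.Connected) (u v : V) :
    ∃ p : G.Walk u v, p.IsPath ∧ p.length = G.dist u v := by
  obtain ⟨p, hp⟩ := hc.exists_walk_length_eq_dist u v
  exact ⟨p.bypass, p.bypass_isPath,
    le_antisymm (hp ▸ p.length_bypass_le) (SimpleGraph.dist_le _)⟩

private lemma spc_dist_le_of_mem_support {G : SimpleGraph V} {u v w : V} {p : G.Walk u v}
    (h : w ∈ p.support) : G.dist u w ≤ p.length :=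
  le_trans (SimpleGraph.dist_le _) (p.length_takeUntil_le h)

private lemma spc_adj_dist_ne {G : SimpleGraph V} (htree : G.IsAcyclic) (hc : G.Connected)
    {o u v : V} (h : G.Adj u v) : G.dist o u ≠ G.dist o v := by
  intro hd
  obtain ⟨P, hP, hPl⟩ := spc_exists_path hc o u
  obtain ⟨Q, hQ, hQl⟩ := spc_exists_path hc o v
  have hv : v ∉ P.support := by
    intro hmem
    have h1 := spc_dist_le_of_mem_support hmem
    have h2 := congrArg SimpleGraph.Walk.length (P.take_spec hmem)
    rw [SimpleGraph.Walk.length_append] at h2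
    have h3 := SimpleGraph.dist_le (P.takeUntil v hmem)
    have h4 : (P.dropUntil v hmem).length = 0 := by omega
    exact h.ne (SimpleGraph.Walk.eq_of_length_eq_zero h4).symm
  have huniq := SimpleGraph.isAcyclic_iff_path_unique.mp htree
    ⟨P.concat h, spc_concat_isPath hP h hv⟩ ⟨Q, hQ⟩
  have hl : (P.concat h).length = Q.length :=
    congrArg (fun q : G.Path o v => q.1.length) huniq
  rw [SimpleGraph.Walk.length_concat] at hl
  omega

private lemma spc_parent_unique {G : SimpleGraph V} (htree : G.IsAcyclic) (hc : G.Connected)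
    {o v u₁ u₂ : V} {m : ℕ} (hv : G.dist o v = m + 1)
    (h₁ : G.Adj v u₁) (hd₁ : G.dist o u₁ = m)
    (h₂ : G.Adj v u₂) (hd₂ : G.dist o u₂ = m) : u₁ = u₂ := by
  obtain ⟨P₁, hP₁, hl₁⟩ := spc_exists_path hc o u₁
  obtain ⟨P₂, hP₂, hl₂⟩ := spc_exists_path hc o u₂
  have hv₁ : v ∉ P₁.support := fun hmem => by
    have := spc_dist_le_of_mem_support hmem; omega
  have hv₂ : v ∉ P₂.support := fun hmem => by
    have := spc_dist_le_of_mem_support hmem; omega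
  have huniq := SimpleGraph.isAcyclic_iff_path_unique.mp htree
    ⟨P₁.concat h₁.symm, spc_concat_isPath hP₁ h₁.symm hv₁⟩
    ⟨P₂.concat h₂.symm, spc_concat_isPath hP₂ h₂.symm hv₂⟩
  have heq : P₁.concat h₁.symm = P₂.concat h₂.symm := congrArg Subtype.val huniq
  obtain ⟨hv', -⟩ := SimpleGraph.Walk.concat_inj heq
  exact hv'

private lemma spc_iso_dist_le {G : SimpleGraph V} (hc : G.Connected) (τ : G ≃g G) (u v : V) :
    G.dist (τ u) (τ v) ≤ G.dist u v := by
  obtain ⟨p, hp⟩ := hc.exists_walk_length_eq_dist u v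
  calc G.dist (τ u) (τ v) ≤ (p.map τ.toHom).length := SimpleGraph.dist_le _
    _ = p.length := by simp
    _ = G.dist u v := hp

private lemma spc_iso_dist {G : SimpleGraph V} (hc : G.Connected) (τ : G ≃g G) (u v : V) :
    G.dist (τ u) (τ v) = G.dist u v := by
  refine le_antisymm (spc_iso_dist_le hc τ u v) ?_
  have := spc_iso_dist_le hc τ.symm (τ u) (τ v)
  simpa using this

private lemma spc_mem_sphere_iff {R : RootedGraph V} {v : V} {n : ℕ} :
    v ∈ R.sphere n ↔ R.G.dist R.o v = n := Iff.rfl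

private lemma spc_iso_sphere {R : RootedGraph V} (τ : R.G ≃g R.G) (hτ : τ R.o = R.o)
    {v : V} {n : ℕ} (hv : v ∈ R.sphere n) : τ v ∈ R.sphere n := by
  have h := spc_iso_dist R.connected τ R.o v
  rw [hτ] at h
  exact spc_mem_sphere_iff.mpr (h.trans (spc_mem_sphere_iff.mp hv))

private lemma spc_fwd_back {R : RootedGraph V} (htree : R.G.IsAcyclic) {n k : ℕ} {x z : V}
    {p : ℕ → V} (hp : R.IsForwardPath n k x z p) : ∀ i, i ≤ k → p (k + i) = p (k - i) := by
  obtain ⟨h0, hend, hadj, hup, hdown⟩ := hp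
  intro i
  induction i with
  | zero => intro _; simp
  | succ i ih =>
    intro hik
    have ih' := ih (by omega)
    have hw : p (k - i) ∈ R.sphere (n + (k - i)) := hup _ (by omega)
    have hdw : R.G.dist R.o (p (k - i)) = n + (k - (i+1)) + 1 := by
      have h := spc_mem_sphere_iff.mp hw; omega
    have e1 : k - (i+1) + 1 = k - i := by omega
    have ha1 : R.G.Adj (p (k - (i+1))) (p (k - i)) := by
      have h := hadj (k - (i+1)) (by omega)
      rwa [e1] at h
    have hm1 : p (k - (i+1)) ∈ R.sphere (n + (k - (i+1))) := hup _ (by omega)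
    have ha2 : R.G.Adj (p (k + i)) (p (k + i + 1)) := hadj _ (by omega)
    rw [ih'] at ha2
    have hm2 : p (k + i + 1) ∈ R.sphere (n + (2*k - (k + i + 1))) := hdown _ (by omega) (by omega)
    have e2 : 2*k - (k + i + 1) = k - (i+1) := by omega
    rw [e2] at hm2
    exact spc_parent_unique htree R.connected hdw ha2 (spc_mem_sphere_iff.mp hm2)
      ha1.symm (spc_mem_sphere_iff.mp hm1)

private lemma spc_fwd_endpoint {R : RootedGraph V} (htree : R.G.IsAcyclic) {n k : ℕ} {x z : V}
    {p : ℕ → V} (hp : R.IsForwardPath n k x z p) : p (2*k) = x := by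
  have h := spc_fwd_back htree hp k le_rfl
  have e : 2*k = k + k := by omega
  rw [e, h]
  simpa using hp.1

private lemma spc_fwd_map {R : RootedGraph V} (τ : R.G ≃g R.G) (hτ : τ R.o = R.o)
    {n k : ℕ} {x z : V} {p : ℕ → V} (hp : R.IsForwardPath n k x z p) :
    R.IsForwardPath n k (τ x) (τ z) (fun j => τ (p j)) := by
  obtain ⟨h0, hend, hadj, hup, hdown⟩ := hp
  exact ⟨congrArg τ h0, fun j hj => congrArg τ (hend j hj),
    fun j hj => τ.map_adj_iff.mpr (hadj j hj),
    fun j hj => spc_iso_sphere τ hτ (hup j hj),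
    fun j hj hj' => spc_iso_sphere τ hτ (hdown j hj hj')⟩

private lemma spc_fwd_card_eq {R : RootedGraph V} (τ : R.G ≃g R.G) (hτo : τ R.o = R.o)
    {x y : V} (hτx : τ x = y) (n k : ℕ) :
    Nat.card {p : ℕ → V // R.IsForwardPath n k x x p}
      = Nat.card {p : ℕ → V // R.IsForwardPath n k y y p} := by
  apply Nat.card_congr
  have hτo' : τ.symm R.o = R.o := by
    have h := τ.symm_apply_apply R.o
    rwa [hτo] at h
  have hτy : τ.symm y = x := by
    have h := τ.symm_apply_apply x
    rwa [hτx] at h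
  exact ⟨fun p => ⟨fun j => τ (p.1 j), by have h := spc_fwd_map τ hτo p.2; rwa [hτx] at h⟩,
    fun q => ⟨fun j => τ.symm (q.1 j), by
      have h := spc_fwd_map τ.symm hτo' q.2; rwa [hτy] at h⟩,
    fun p => Subtype.ext (funext fun j => τ.symm_apply_apply _),
    fun q => Subtype.ext (funext fun j => τ.apply_symm_apply _)⟩

private lemma spc_fb_eq {R : RootedGraph V} (htree : R.G.IsAcyclic) (n k l : ℕ) (x y : V) :
    R.fbCount n k l x y =
      Nat.card {p : ℕ → V // R.IsForwardPath n k x x p} *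
      Nat.card {q : ℕ → V // R.IsBackwardPath n l x y q} := by
  rw [← Nat.card_prod]
  apply Nat.card_congr
  exact ⟨fun s => (⟨s.1.1, by
        have h := s.2.1; rwa [spc_fwd_endpoint htree s.2.1] at h⟩,
      ⟨s.1.2, by
        have h := s.2.2; rwa [spc_fwd_endpoint htree s.2.1] at h⟩),
    fun t => ⟨(t.1.1, t.2.1), by
      have e : t.1.1 (2*k) = x := t.1.2.2.1 _ le_rfl
      show R.IsForwardPath n k x (t.1.1 (2*k)) t.1.1 ∧
        R.IsBackwardPath n l (t.1.1 (2*k)) y t.2.1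
      rw [e]
      exact ⟨t.1.2, t.2.2⟩⟩,
    fun s => rfl, fun t => rfl⟩

private lemma spc_bf_eq {R : RootedGraph V} (htree : R.G.IsAcyclic) (n k l : ℕ) (x y : V) :
    R.bfCount n l k x y =
      Nat.card {p : ℕ → V // R.IsForwardPath n k y y p} *
      Nat.card {q : ℕ → V // R.IsBackwardPath n l x y q} := by
  rw [← Nat.card_prod]
  apply Nat.card_congr
  exact ⟨fun s => (⟨s.1.2, by
        have h := s.2.2
        rwa [(spc_fwd_endpoint htree s.2.2).symm.trans (s.2.2.2.1 _ le_rfl)] at h⟩,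
      ⟨s.1.1, by
        have h := s.2.1
        rwa [(spc_fwd_endpoint htree s.2.2).symm.trans (s.2.2.2.1 _ le_rfl)] at h⟩),
    fun t => ⟨(t.2.1, t.1.1), by
      have e : t.2.1 (2*l) = y := t.2.2.2.2.1 _ le_rfl
      show R.IsBackwardPath n l x (t.2.1 (2*l)) t.2.1 ∧
        R.IsForwardPath n k (t.2.1 (2*l)) y t.1.1
      rw [e]
      exact ⟨t.2.2, t.1.2⟩⟩,
    fun s => rfl, fun t => rfl⟩

end StrPCAux

/-- every spherically symmetric rooted tree is strongly path
commuting. -/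
theorem stmt18 {V : Type*} (R : RootedGraph V) (htree : R.G.IsAcyclic)
    (hsym : ∀ n : ℕ, ∀ x ∈ R.sphere n, ∀ y ∈ R.sphere n,
      ∃ τ : R.G ≃g R.G, τ R.o = R.o ∧ τ x = y) :
    R.PathCommuting ∧
    ∀ n : ℕ, ∀ x ∈ R.sphere n, ∀ y ∈ R.sphere n,
      (R.G.neighborSet x).ncard = (R.G.neighborSet y).ncard := by
  constructor
  · intro n x hx y hy k l
    refine ⟨?_, ?_, ?_⟩
    · obtain ⟨τ, hτo, hτx⟩ := hsym n x hx y hy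
      rw [spc_fb_eq htree n k l x y, spc_bf_eq htree n k l x y,
        spc_fwd_card_eq τ hτo hτx n k]
    · haveI h1 : IsEmpty
          {p : ℕ → V // R.IsForwardPath n k x (p (2*k)) p ∧ R.G.Adj (p (2*k)) y} := by
        constructor
        rintro ⟨p, hp, hadj⟩
        have hm : p (2*k) ∈ R.sphere (n + (2*k - 2*k)) := hp.2.2.2.2 _ (by omega) le_rfl
        have h2 := spc_mem_sphere_iff.mp hm
        have h3 := spc_mem_sphere_iff.mp hy
        exact spc_adj_dist_ne (o := R.o) htree R.connected hadj (by omega)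
      haveI h2 : IsEmpty
          {p : ℕ → V // R.G.Adj x (p 0) ∧ R.IsForwardPath n k (p 0) y p} := by
        constructor
        rintro ⟨p, hadj, hp⟩
        have hm : p 0 ∈ R.sphere (n + 0) := hp.2.2.2.1 0 (Nat.zero_le _)
        have h2 := spc_mem_sphere_iff.mp hm
        have h3 := spc_mem_sphere_iff.mp hx
        exact spc_adj_dist_ne (o := R.o) htree R.connected hadj (by omega)
      have e1 : R.tailedFCount n k x y = 0 := Nat.card_of_isEmpty
      have e2 : R.headedFCount n k x y = 0 := Nat.card_of_isEmpty
      rw [e1, e2]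
    · haveI h1 : IsEmpty
          {p : ℕ → V // R.IsBackwardPath n k x (p (2*k)) p ∧ R.G.Adj (p (2*k)) y} := by
        constructor
        rintro ⟨p, hp, hadj⟩
        have hm : p (2*k) ∈ R.sphere (n - (2*k - 2*k)) := hp.2.2.2.2.2 _ (by omega) le_rfl
        have h2 := spc_mem_sphere_iff.mp hm
        have h3 := spc_mem_sphere_iff.mp hy
        exact spc_adj_dist_ne (o := R.o) htree R.connected hadj (by omega)
      haveI h2 : IsEmpty
          {p : ℕ → V // R.G.Adj x (p 0) ∧ R.IsBackwardPath n k (p 0) y p} := by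
        constructor
        rintro ⟨p, hadj, hp⟩
        have hm : p 0 ∈ R.sphere (n - 0) := hp.2.2.2.2.1 0 (Nat.zero_le _)
        have h2 := spc_mem_sphere_iff.mp hm
        have h3 := spc_mem_sphere_iff.mp hx
        exact spc_adj_dist_ne (o := R.o) htree R.connected hadj (by omega)
      have e1 : R.tailedBCount n k x y = 0 := Nat.card_of_isEmpty
      have e2 : R.headedBCount n k x y = 0 := Nat.card_of_isEmpty
      rw [e1, e2]
  · intro n x hx y hy
    obtain ⟨τ, hτo, hτx⟩ := hsym n x hx y hy
    rw [← Nat.card_coe_set_eq, ← Nat.card_coe_set_eq]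
    exact Nat.card_congr ((τ.mapNeighborSet x).trans (Equiv.setCongr (by rw [hτx])))
end
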